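/- arXiv:1403.8120 — 7 statements merged into one kernel-verified Lean document; each statement's English description precedes it below -/
import Mathlib

section
/- Let t ∈ (0,1), and for each n let Z_{n,1},…,Z_{n,n} be independent ℝ^d-valued random vectors with Z_{n,j} distributed according to P1 for j ≤ ⌊nt⌋ and according to P2 for j > ⌊nt⌋, where P1, P2 have finite second moments and common covariance matrix Σ. Then for all s1, s2 ∈ [0,1], lim_{n→∞} n · Cov(Û_n(s1), Û_n(s2)) = (min(s1,s2) − s1 s2) Σ, where Cov(Û_n(s1), Û_n(s2)) = E[(Û_n(s1) − E Û_n(s1))(Û_n(s2) − E Û_n(s2))ᵀ]. -/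
/-!
Write `Û_n(s) = ∑_k w_n(s, k) • Z_{n,k}` with `w_n(s, k) = (𝟙[k < ⌊ns⌋] - s) / n`. Independent
summands contribute no cross covariances, and every summand has covariance `Σ` whatever its law,
so `n · Cov(Û_n(s₁), Û_n(s₂)) = n ∑_k w_n(s₁, k) w_n(s₂, k) · Σ`. Counting indicators, the sum
equals `(min(⌊ns₁⌋, ⌊ns₂⌋) - s₂⌊ns₁⌋ - s₁⌊ns₂⌋ + n s₁ s₂) / n²`, and `⌊ns⌋ / n → s`.
-/

open MeasureTheory ProbabilityTheory Filter Topology Finset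

section Covariance

variable {Ω ι : Type*} {mΩ : MeasurableSpace Ω} {μ : Measure Ω} {d : ℕ}

lemma covariance_fun_sum_fun_sum_of_indepFun [IsFiniteMeasure μ] [Fintype ι]
    {X Y : ι → Ω → ℝ} (a b : ι → ℝ)
    (hX : ∀ k, MemLp (X k) 2 μ) (hY : ∀ k, MemLp (Y k) 2 μ)
    (hXY : ∀ k l, k ≠ l → X k ⟂ᵢ[μ] Y l) :
    cov[fun ω ↦ ∑ k, a k * X k ω, fun ω ↦ ∑ k, b k * Y k ω; μ] =
      ∑ k, a k * b k * cov[X k, Y k; μ] := by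
  rw [covariance_fun_sum_fun_sum (fun k ↦ (hX k).const_mul (a k))
    (fun k ↦ (hY k).const_mul (b k))]
  refine sum_congr rfl fun k _ ↦ ?_
  rw [sum_eq_single k]
  · rw [covariance_const_mul_left, covariance_const_mul_right, mul_assoc]
  · intro l _ hlk
    rw [covariance_const_mul_left, covariance_const_mul_right,
      (hXY k l hlk.symm).covariance_eq_zero (hX k) (hY l), mul_zero, mul_zero]
  · simp

lemma covariance_eval_sum_smul_of_iIndepFun [IsFiniteMeasure μ] [Fintype ι]
    {Z : ι → Ω → EuclideanSpace ℝ (Fin d)} (hZ : ∀ k, MemLp (Z k) 2 μ) (hindep : iIndepFun Z μ)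
    (a b : ι → ℝ) (i j : Fin d) :
    cov[fun ω ↦ (∑ k, a k • Z k ω) i, fun ω ↦ (∑ k, b k • Z k ω) j; μ] =
      ∑ k, a k * b k * cov[fun ω ↦ Z k ω i, fun ω ↦ Z k ω j; μ] := by
  have hcoord : ∀ i : Fin d, Measurable fun z : EuclideanSpace ℝ (Fin d) ↦ z i := fun _ ↦ by
    fun_prop
  simp only [WithLp.ofLp_sum, WithLp.ofLp_smul, Finset.sum_apply, Pi.smul_apply, smul_eq_mul]
  exact covariance_fun_sum_fun_sum_of_indepFun a b
    (fun k ↦ (EuclideanSpace.proj (𝕜 := ℝ) i).comp_memLp' (hZ k))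
    (fun k ↦ (EuclideanSpace.proj (𝕜 := ℝ) j).comp_memLp' (hZ k))
    (fun k l hkl ↦ (hindep.indepFun hkl).comp (hcoord i) (hcoord j))

lemma integral_euclideanSpace_apply {W : Ω → EuclideanSpace ℝ (Fin d)} (hW : Integrable W μ)
    (i : Fin d) : (∫ ω, W ω ∂μ) i = ∫ ω, W ω i ∂μ :=
  ((EuclideanSpace.proj i).integral_comp_comm hW).symm

lemma covariance_eval_eq_integral {W V : Ω → EuclideanSpace ℝ (Fin d)}
    (hW : Integrable W μ) (hV : Integrable V μ) (i j : Fin d) :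
    cov[fun ω ↦ W ω i, fun ω ↦ V ω j; μ] =
      ∫ ω, (W ω i - (∫ ω', W ω' ∂μ) i) * (V ω j - (∫ ω', V ω' ∂μ) j) ∂μ := by
  rw [integral_euclideanSpace_apply hW, integral_euclideanSpace_apply hV]
  rfl

lemma covariance_eval_eq_integral_map {W : Ω → EuclideanSpace ℝ (Fin d)} (hW : AEMeasurable W μ)
    (hint : Integrable id (μ.map W)) (i j : Fin d) :
    cov[fun ω ↦ W ω i, fun ω ↦ W ω j; μ] =
      ∫ z, (z i - (∫ z, z ∂μ.map W) i) * (z j - (∫ z, z ∂μ.map W) j) ∂μ.map W :=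
  (covariance_map_fun (X := fun z ↦ z i) (Y := fun z ↦ z j) (by fun_prop) (by fun_prop)
    hW).symm.trans (covariance_eval_eq_integral (W := id) (V := id) hint hint i j)

end Covariance

lemma sum_range_ite_lt {n m : ℕ} (hm : m ≤ n) :
    ∑ k ∈ range n, (if k < m then 1 else 0 : ℝ) = m := by
  rw [sum_boole, range_eq_Ico, Ico_filter_lt, min_eq_right hm]
  simp

lemma sum_range_ite_sub_mul_ite_sub {n a b : ℕ} (ha : a ≤ n) (hb : b ≤ n) (s1 s2 : ℝ) :
    ∑ k ∈ range n, ((if k < a then 1 else 0) - s1) * ((if k < b then 1 else 0) - s2)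
      = min a b - s2 * a - s1 * b + n * s1 * s2 := by
  have hexpand : ∀ k, ((if k < a then 1 else 0) - s1) * ((if k < b then 1 else 0) - s2) =
      (if k < min a b then 1 else 0) - s2 * (if k < a then 1 else 0)
        - s1 * (if k < b then 1 else 0) + s1 * s2 := by
    intro k
    by_cases hka : k < a <;> by_cases hkb : k < b <;> simp [hka, hkb] <;> ring
  simp only [hexpand, sum_add_distrib, sum_sub_distrib, ← mul_sum,
    sum_range_ite_lt ha, sum_range_ite_lt hb, sum_range_ite_lt (min_le_of_left_le ha),
    sum_const, card_range, nsmul_eq_mul, Nat.cast_min]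
  ring

noncomputable def cusumWeight (n : ℕ) (s : ℝ) (k : ℕ) : ℝ :=
  ((if k < ⌊n * s⌋₊ then 1 else 0) - s) / n

lemma cusum_eq_sum_cusumWeight_smul {E : Type*} [AddCommGroup E] [Module ℝ E]
    (n : ℕ) (s : ℝ) (z : Fin n → E) :
    ((1 : ℝ) / n) • (∑ j ∈ univ.filter (fun j : Fin n => (j : ℕ) < ⌊(n : ℝ) * s⌋₊), z j)
      - (s / n) • ∑ j, z j = ∑ k : Fin n, cusumWeight n s k • z k := by
  simp only [sum_filter, smul_sum, ← sum_sub_distrib, cusumWeight, sub_div, sub_smul]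
  refine sum_congr rfl fun k _ ↦ ?_
  split_ifs <;> simp

lemma tendsto_natFloor_mul_div_natCast (s : ℝ) (hs : 0 ≤ s) :
    Tendsto (fun n : ℕ ↦ (⌊n * s⌋₊ : ℝ) / n) atTop (𝓝 s) := by
  simpa only [mul_comm, Function.comp_def] using
    (tendsto_nat_floor_mul_div_atTop hs).comp tendsto_natCast_atTop_atTop

lemma tendsto_mul_sum_cusumWeight_mul {s1 s2 : ℝ} (hs1 : s1 ∈ Set.Icc (0 : ℝ) 1)
    (hs2 : s2 ∈ Set.Icc (0 : ℝ) 1) :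
    Tendsto (fun n : ℕ ↦ n * ∑ k : Fin n, cusumWeight n s1 k * cusumWeight n s2 k) atTop
      (𝓝 (min s1 s2 - s1 * s2)) := by
  have h1 := tendsto_natFloor_mul_div_natCast s1 hs1.1
  have h2 := tendsto_natFloor_mul_div_natCast s2 hs2.1
  have hlim := ((h1.min h2).sub (h1.const_mul s2)).sub (h2.const_mul s1) |>.add_const (s1 * s2)
  rw [show min s1 s2 - s2 * s1 - s1 * s2 + s1 * s2 = min s1 s2 - s1 * s2 by ring] at hlim
  refine hlim.congr' ?_
  filter_upwards [eventually_ge_atTop 1] with n hn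
  have hn0 : (n : ℝ) ≠ 0 := by positivity
  have hfloor_le : ∀ s ∈ Set.Icc (0 : ℝ) 1, ⌊n * s⌋₊ ≤ n := fun s hs ↦
    Nat.floor_le_of_le (mul_le_of_le_one_right n.cast_nonneg hs.2)
  rw [Fin.sum_univ_eq_sum_range (fun k ↦ cusumWeight n s1 k * cusumWeight n s2 k)]
  simp only [cusumWeight, div_mul_div_comm, ← sum_div,
    sum_range_ite_sub_mul_ite_sub (hfloor_le s1 hs1) (hfloor_le s2 hs2),
    min_div_div_right n.cast_nonneg]
  field_simp
  push_cast
  ring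

theorem cusum_covariance_limit_general
    (d : ℕ) (t : ℝ)
    (P1 P2 : Measure (EuclideanSpace ℝ (Fin d)))
    (hP1 : MemLp id 2 P1) (hP2 : MemLp id 2 P2)
    (μ1 μ2 : EuclideanSpace ℝ (Fin d))
    (hμ1 : μ1 = ∫ z, z ∂P1) (hμ2 : μ2 = ∫ z, z ∂P2)
    (Sig : Matrix (Fin d) (Fin d) ℝ)
    (hSig1 : ∀ i j, Sig i j = ∫ z, (z i - μ1 i) * (z j - μ1 j) ∂P1)
    (hSig2 : ∀ i j, Sig i j = ∫ z, (z i - μ2 i) * (z j - μ2 j) ∂P2)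
    (Ω : ℕ → Type) (mΩ : ∀ n, MeasurableSpace (Ω n))
    (P : ∀ n, Measure (Ω n)) (hP : ∀ n, IsProbabilityMeasure (P n))
    (Z : ∀ n : ℕ, Fin n → Ω n → EuclideanSpace ℝ (Fin d))
    (hmeas : ∀ n j, Measurable (Z n j))
    (hindep : ∀ n, iIndepFun (Z n) (P n))
    (hlaw : ∀ n (j : Fin n), Measure.map (Z n j) (P n) =
      if (j : ℕ) < ⌊(n : ℝ) * t⌋₊ then P1 else P2)
    (U : ∀ n : ℕ, ℝ → Ω n → EuclideanSpace ℝ (Fin d))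
    (hU : ∀ n s ω, U n s ω =
      ((1 : ℝ) / n) • (∑ j ∈ Finset.univ.filter (fun j : Fin n => (j : ℕ) < ⌊(n : ℝ) * s⌋₊),
        Z n j ω)
      - (s / n) • (∑ j, Z n j ω)) :
    ∀ s1 ∈ Set.Icc (0:ℝ) 1, ∀ s2 ∈ Set.Icc (0:ℝ) 1, ∀ i j,
      Tendsto (fun (n : ℕ) => (n : ℝ) *
          ∫ ω, (U n s1 ω i - (∫ ω', U n s1 ω' ∂(P n)) i) *
               (U n s2 ω j - (∫ ω', U n s2 ω' ∂(P n)) j) ∂(P n)) atTop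
        (𝓝 ((min s1 s2 - s1 * s2) * Sig i j)) := by
  intro s1 hs1 s2 hs2 i j
  have hlaw_memLp : ∀ n (k : Fin n), MemLp id 2 ((P n).map (Z n k)) := fun n k ↦ by
    rw [hlaw]
    split_ifs
    exacts [hP1, hP2]
  have hlaw_cov : ∀ n (k : Fin n), cov[fun ω ↦ Z n k ω i, fun ω ↦ Z n k ω j; P n] = Sig i j := by
    intro n k
    rw [covariance_eval_eq_integral_map (hmeas n k).aemeasurable
      ((hlaw_memLp n k).integrable one_le_two), hlaw]
    split_ifs
    · rw [hSig1, hμ1]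
    · rw [hSig2, hμ2]
  refine ((tendsto_mul_sum_cusumWeight_mul hs1 hs2).mul_const _).congr fun n ↦ ?_
  have hZ : ∀ k, MemLp (Z n k) 2 (P n) := fun k ↦
    (hlaw_memLp n k).comp_of_map (hmeas n k).aemeasurable
  have hUsum : ∀ s, U n s = fun ω ↦ ∑ k : Fin n, cusumWeight n s k • Z n k ω := fun s ↦
    funext fun ω ↦ (hU n s ω).trans (cusum_eq_sum_cusumWeight_smul n s _)
  have hUint : ∀ s, Integrable (U n s) (P n) := fun s ↦ by
    rw [hUsum]
    exact integrable_finsetSum _ fun k _ ↦ ((hZ k).integrable one_le_two).fun_smul _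
  rw [← covariance_eval_eq_integral (hUint s1) (hUint s2), hUsum, hUsum,
    covariance_eval_sum_smul_of_iIndepFun hZ (hindep n)]
  simp only [hlaw_cov, ← sum_mul]
  ring

/-- Under a change-point at `t ∈ (0,1)` with common covariance matrix `Sig`,
the covariance matrix of the CUSUM process satisfies
`lim_n n · Cov(Û_n(s1), Û_n(s2)) = (min(s1,s2) - s1 s2) Σ`. -/
theorem cusum_covariance_limit
    (d : ℕ) (t : ℝ) (ht0 : 0 < t) (ht1 : t < 1)
    (P1 P2 : Measure (EuclideanSpace ℝ (Fin d)))
    [IsProbabilityMeasure P1] [IsProbabilityMeasure P2]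
    (hP1 : MemLp id 2 P1) (hP2 : MemLp id 2 P2)
    (μ1 μ2 : EuclideanSpace ℝ (Fin d))
    (hμ1 : μ1 = ∫ z, z ∂P1) (hμ2 : μ2 = ∫ z, z ∂P2)
    (Sig : Matrix (Fin d) (Fin d) ℝ)
    (hSig1 : ∀ i j, Sig i j = ∫ z, (z i - μ1 i) * (z j - μ1 j) ∂P1)
    (hSig2 : ∀ i j, Sig i j = ∫ z, (z i - μ2 i) * (z j - μ2 j) ∂P2)
    (Ω : ℕ → Type) (mΩ : ∀ n, MeasurableSpace (Ω n))
    (P : ∀ n, Measure (Ω n)) (hP : ∀ n, IsProbabilityMeasure (P n))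
    (Z : ∀ n : ℕ, Fin n → Ω n → EuclideanSpace ℝ (Fin d))
    (hmeas : ∀ n j, Measurable (Z n j))
    (hindep : ∀ n, iIndepFun (Z n) (P n))
    (hlaw : ∀ n (j : Fin n), Measure.map (Z n j) (P n) =
      if (j : ℕ) < ⌊(n : ℝ) * t⌋₊ then P1 else P2)
    (U : ∀ n : ℕ, ℝ → Ω n → EuclideanSpace ℝ (Fin d))
    (hU : ∀ n s ω, U n s ω =
      ((1 : ℝ) / n) • (∑ j ∈ Finset.univ.filter (fun j : Fin n => (j : ℕ) < ⌊(n : ℝ) * s⌋₊),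
        Z n j ω)
      - (s / n) • (∑ j, Z n j ω)) :
    ∀ s1 ∈ Set.Icc (0:ℝ) 1, ∀ s2 ∈ Set.Icc (0:ℝ) 1, ∀ i j,
      Tendsto (fun (n : ℕ) => (n : ℝ) *
          ∫ ω, (U n s1 ω i - (∫ ω', U n s1 ω' ∂(P n)) i) *
               (U n s2 ω j - (∫ ω', U n s2 ω' ∂(P n)) j) ∂(P n)) atTop
        (𝓝 ((min s1 s2 - s1 * s2) * Sig i j)) :=
  cusum_covariance_limit_general d t P1 P2 hP1 hP2 μ1 μ2 hμ1 hμ2 Sig hSig1 hSig2 Ω mΩ P hP Z hmeas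
    hindep hlaw U hU
end

section
/- For every t ∈ [0,1], ∫₀¹ ∫₀¹ (min(s1,t) − s1 t)(min(s2,t) − s2 t)(min(s1,s2) − s1 s2) ds1 ds2 = t²(1−t)²(1 + 2t(1−t))/45. -/
/-!
Write `K s t = min s t - s * t` (`bridgeCov`) and `K₂ s t = ∫₀¹ K s r * K r t dr` for the
iterated kernel (`iterBridgeCov`), so that the double integral is `∫₀¹ K s t * K₂ s t ds`.
For `0 ≤ s ≤ t ≤ 1` both kernels are polynomials: `K s t = s (1 - t)` and
`K₂ s t = s (1 - t) (2t - s² - t²) / 6`. Both are invariant under the reflection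
`(s, t) ↦ (1 - s, 1 - t)`, which carries the integral over `[t, 1]` to the integral over
`[0, 1 - t]` with `t` replaced by `1 - t`. The answer is therefore `P t + P (1 - t)` with
`P t = ∫₀ᵗ K s t * K₂ s t ds = t⁴ (1 - t)² (5 - 4t) / 45`.
-/

open intervalIntegral

noncomputable def bridgeCov (s t : ℝ) : ℝ := min s t - s * t

noncomputable def iterBridgeCov (s t : ℝ) : ℝ :=
  ∫ r in (0:ℝ)..1, bridgeCov s r * bridgeCov r t

theorem bridgeCov_comm (s t : ℝ) : bridgeCov s t = bridgeCov t s := by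
  rw [bridgeCov, bridgeCov, min_comm, mul_comm]

theorem bridgeCov_of_le {s t : ℝ} (h : s ≤ t) : bridgeCov s t = s * (1 - t) := by
  rw [bridgeCov, min_eq_left h]; ring

theorem bridgeCov_of_ge {s t : ℝ} (h : t ≤ s) : bridgeCov s t = t * (1 - s) := by
  rw [bridgeCov_comm, bridgeCov_of_le h]

theorem bridgeCov_one_sub (s t : ℝ) : bridgeCov (1 - s) (1 - t) = bridgeCov s t := by
  rcases le_total s t with h | h
  · rw [bridgeCov_of_ge (by linarith), bridgeCov_of_le h]; ring
  · rw [bridgeCov_of_le (by linarith), bridgeCov_of_ge h]; ring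

@[fun_prop]
theorem Continuous.bridgeCov {α : Type*} [TopologicalSpace α] {f g : α → ℝ}
    (hf : Continuous f) (hg : Continuous g) : Continuous fun x => bridgeCov (f x) (g x) := by
  unfold _root_.bridgeCov; fun_prop

theorem continuous_iterBridgeCov_left (t : ℝ) : Continuous fun s => iterBridgeCov s t :=
  continuous_parametric_intervalIntegral_of_continuous' (by fun_prop) 0 1

theorem iterBridgeCov_one_sub (s t : ℝ) : iterBridgeCov (1 - s) (1 - t) = iterBridgeCov s t := by
  have h := integral_comp_sub_left
    (fun r => bridgeCov (1 - s) r * bridgeCov r (1 - t)) (a := 0) (b := 1) 1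
  rw [sub_self, sub_zero] at h
  simp only [iterBridgeCov, ← h, bridgeCov_one_sub]

theorem iterBridgeCov_of_le {s t : ℝ} (hs : 0 ≤ s) (hst : s ≤ t) (ht : t ≤ 1) :
    iterBridgeCov s t = s * (1 - t) * (2 * t - s ^ 2 - t ^ 2) / 6 := by
  have hint : ∀ a b, IntervalIntegrable (fun r => bridgeCov s r * bridgeCov r t)
      MeasureTheory.volume a b := fun a b => Continuous.intervalIntegrable (by fun_prop) a b
  have left : ∫ r in (0:ℝ)..s, bridgeCov s r * bridgeCov r t
      = (1 - s) * (1 - t) * s ^ 3 / 3 := by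
    rw [integral_congr_Ioo_of_le hs (g := fun r => (1 - s) * (1 - t) * r ^ 2)]
    · rw [integral_const_mul, integral_pow]; ring
    · intro r hr
      simp only [bridgeCov_of_ge hr.2.le, bridgeCov_of_le (hr.2.le.trans hst)]; ring
  have middle : ∫ r in s..t, bridgeCov s r * bridgeCov r t
      = s * (1 - t) * ((t ^ 2 - s ^ 2) / 2 - (t ^ 3 - s ^ 3) / 3) := by
    rw [integral_congr_Ioo_of_le hst (g := fun r => s * (1 - t) * (r - r ^ 2))]
    · rw [integral_const_mul, integral_sub intervalIntegrable_id (intervalIntegrable_pow 2),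
        integral_id, integral_pow]
      ring
    · intro r hr
      simp only [bridgeCov_of_le hr.1.le, bridgeCov_of_le hr.2.le]; ring
  have right : ∫ r in t..1, bridgeCov s r * bridgeCov r t = s * t * (1 - t) ^ 3 / 3 := by
    rw [integral_congr_Ioo_of_le ht (g := fun r => s * t * (1 - r) ^ 2)]
    · rw [integral_const_mul, integral_comp_sub_left (fun x => x ^ 2), integral_pow]; ring
    · intro r hr
      simp only [bridgeCov_of_le (hst.trans hr.1.le), bridgeCov_of_ge hr.1.le]; ring
  rw [iterBridgeCov, ← integral_add_adjacent_intervals (hint 0 s) (hint s 1),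
    ← integral_add_adjacent_intervals (hint s t) (hint t 1), left, middle, right]
  ring

theorem integral_bridgeCov_mul_iterBridgeCov_of_le {t : ℝ} (ht0 : 0 ≤ t) (ht1 : t ≤ 1) :
    ∫ s in (0:ℝ)..t, bridgeCov s t * iterBridgeCov s t
      = t ^ 4 * (1 - t) ^ 2 * (5 - 4 * t) / 45 := by
  rw [integral_congr_Ioo_of_le ht0
    (g := fun s => (1 - t) ^ 2 / 6 * ((2 * t - t ^ 2) * s ^ 2 - s ^ 4))]
  · rw [integral_const_mul, integral_sub ((intervalIntegrable_pow 2).const_mul _)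
      (intervalIntegrable_pow 4), integral_const_mul, integral_pow, integral_pow]
    ring
  · intro s hs
    simp only [bridgeCov_of_le hs.2.le, iterBridgeCov_of_le hs.1.le hs.2.le ht1]; ring

theorem integral_bridgeCov_mul_iterBridgeCov {t : ℝ} (ht0 : 0 ≤ t) (ht1 : t ≤ 1) :
    ∫ s in (0:ℝ)..1, bridgeCov s t * iterBridgeCov s t
      = t ^ 2 * (1 - t) ^ 2 * (1 + 2 * t * (1 - t)) / 45 := by
  have hint : ∀ a b, IntervalIntegrable (fun s => bridgeCov s t * iterBridgeCov s t)
      MeasureTheory.volume a b := fun a b =>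
    ((by fun_prop : Continuous fun s => bridgeCov s t).mul
      (continuous_iterBridgeCov_left t)).intervalIntegrable a b
  have reflect : ∫ s in t..1, bridgeCov s t * iterBridgeCov s t
      = ∫ s in (0:ℝ)..(1 - t), bridgeCov s (1 - t) * iterBridgeCov s (1 - t) := by
    have h := integral_comp_sub_left
      (fun s => bridgeCov s t * iterBridgeCov s t) (a := 0) (b := 1 - t) 1
    rw [sub_sub_cancel, sub_zero] at h
    rw [← h]
    congr 1 with s
    rw [← bridgeCov_one_sub s, ← iterBridgeCov_one_sub s, sub_sub_cancel]
  rw [← integral_add_adjacent_intervals (hint 0 t) (hint t 1), reflect,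
    integral_bridgeCov_mul_iterBridgeCov_of_le ht0 ht1,
    integral_bridgeCov_mul_iterBridgeCov_of_le (by linarith) (by linarith)]
  ring

/-- For every `t ∈ [0,1]`,
`∫₀¹∫₀¹ (min(s1,t) - s1 t)(min(s2,t) - s2 t)(min(s1,s2) - s1 s2) ds1 ds2
  = t²(1-t)²(1 + 2t(1-t))/45`. -/
theorem double_integral_drift_brownian_bridge_kernel (t : ℝ) (ht : t ∈ Set.Icc (0:ℝ) 1) :
    (∫ s1 in (0:ℝ)..1, ∫ s2 in (0:ℝ)..1,
      (min s1 t - s1 * t) * (min s2 t - s2 * t) * (min s1 s2 - s1 * s2))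
      = t ^ 2 * (1 - t) ^ 2 * (1 + 2 * t * (1 - t)) / 45 := by
  have inner : ∀ s1 : ℝ, ∫ s2 in (0:ℝ)..1,
      (min s1 t - s1 * t) * (min s2 t - s2 * t) * (min s1 s2 - s1 * s2)
        = bridgeCov s1 t * iterBridgeCov s1 t := fun s1 => by
    rw [iterBridgeCov, ← integral_const_mul]
    congr 1 with s2
    simp only [bridgeCov]; ring
  simp_rw [inner]
  exact integral_bridgeCov_mul_iterBridgeCov ht.1 ht.2
end

section
/- For each n let M̂_n and τ̂_n be real random variables on a probability space (Ω_n, P_n) with τ̂_n > 0 almost surely, let δ > 0 and Δ > 0 with δ ≤ Δ, let α ∈ (0,1), and let u_{1−α} be the (1−α)-quantile of the standard normal distribution. Assume that √n(M̂_n − δ²)/τ̂_n converges in distribution to a standard normal random variable. Then limsup_{n→∞} P_n( M̂_n ≥ Δ² + u_{1−α} τ̂_n/√n ) ≤ α; moreover, if δ = Δ, then lim_{n→∞} P_n( M̂_n ≥ Δ² + u_{1−α} τ̂_n/√n ) = α. -/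
/-!
Writing `X_n = √n (M̂_n - δ²) / τ̂_n`, the rejection event is contained in `{X_n ≥ u}`
(up to a null set, since `τ̂_n > 0` a.s.), with equality when `δ = Δ`. As the standard Gaussian
has no atoms, `[u, ∞)` is a continuity set of the limit law, so by the portmanteau theorem
`P_n(X_n ≥ u) → 1 - Φ(u) = α`.

Convergence of `∫ f(X_n) dP_n` for all bounded continuous `f` does not presuppose that `X_n` is
measurable; it forces it eventually, though: for `f = arctan + π` the limit is positive, so the
integrals are eventually nonzero, hence `arctan ∘ X_n` is eventually integrable.
-/

open MeasureTheory ProbabilityTheory Filter Topology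
open scoped BoundedContinuousFunction

section AEMeasurable

variable {Ω : Type*} [MeasurableSpace Ω] {P : Measure Ω}

lemma Real.measurable_tan : Measurable Real.tan := by
  rw [show Real.tan = fun x => Real.sin x / Real.cos x from funext Real.tan_eq_sin_div_cos]
  fun_prop

lemma aemeasurable_of_aemeasurable_arctan {X : Ω → ℝ}
    (h : AEMeasurable (fun ω => Real.arctan (X ω)) P) : AEMeasurable X P :=
  (Real.measurable_tan.comp_aemeasurable h).congr (.of_forall fun ω => Real.tan_arctan (X ω))

noncomputable def arctanAddPi : ℝ →ᵇ ℝ :=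
  BoundedContinuousFunction.ofNormedAddCommGroup (fun x => Real.arctan x + Real.pi)
    (by fun_prop) (3 * Real.pi / 2) fun x => by
      have h₁ := Real.neg_pi_div_two_lt_arctan x
      have h₂ := Real.arctan_lt_pi_div_two x
      rw [Real.norm_eq_abs, abs_le]
      constructor <;> linarith

lemma arctanAddPi_apply (x : ℝ) : arctanAddPi x = Real.arctan x + Real.pi := rfl

lemma pi_div_two_lt_arctanAddPi (x : ℝ) : Real.pi / 2 < arctanAddPi x := by
  rw [arctanAddPi_apply]
  linarith [Real.neg_pi_div_two_lt_arctan x]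

lemma integral_arctanAddPi_pos (μ : Measure ℝ) [IsProbabilityMeasure μ] :
    0 < ∫ x, arctanAddPi x ∂μ :=
  calc (0 : ℝ) < Real.pi / 2 := by positivity
    _ = ∫ _, Real.pi / 2 ∂μ := by simp
    _ ≤ ∫ x, arctanAddPi x ∂μ :=
      integral_mono (integrable_const _) (arctanAddPi.integrable μ)
        fun x => (pi_div_two_lt_arctanAddPi x).le

lemma aemeasurable_of_integral_arctanAddPi_ne_zero {X : Ω → ℝ}
    (h : ∫ ω, arctanAddPi (X ω) ∂P ≠ 0) : AEMeasurable X P := by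
  have hint : Integrable (fun ω => arctanAddPi (X ω)) P := by
    by_contra hni
    exact h (integral_undef hni)
  refine aemeasurable_of_aemeasurable_arctan ?_
  simpa only [arctanAddPi_apply, add_sub_cancel_right] using
    hint.aestronglyMeasurable.aemeasurable.sub_const Real.pi

end AEMeasurable

section WeakConvergence

variable {ι : Type*} {l : Filter ι} {Ω : ι → Type*} {mΩ : ∀ i, MeasurableSpace (Ω i)}
  {P : ∀ i, Measure (Ω i)} {X : ∀ i, Ω i → ℝ}
  {μ : Measure ℝ} [IsProbabilityMeasure μ]

lemma eventually_aemeasurable_of_tendsto_integral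
    (h : ∀ f : ℝ →ᵇ ℝ, Tendsto (fun i => ∫ ω, f (X i ω) ∂P i) l (𝓝 (∫ x, f x ∂μ))) :
    ∀ᶠ i in l, AEMeasurable (X i) (P i) :=
  ((h arctanAddPi).eventually_ne (integral_arctanAddPi_pos μ).ne').mono
    fun _ => aemeasurable_of_integral_arctanAddPi_ne_zero

lemma tendsto_measure_preimage_of_tendsto_integral [∀ i, IsProbabilityMeasure (P i)]
    (h : ∀ f : ℝ →ᵇ ℝ, Tendsto (fun i => ∫ ω, f (X i ω) ∂P i) l (𝓝 (∫ x, f x ∂μ)))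
    {s : Set ℝ} (hs : MeasurableSet s) (hs' : μ (frontier s) = 0) :
    Tendsto (fun i => P i (X i ⁻¹' s)) l (𝓝 (μ s)) := by
  classical
  have hmeas := eventually_aemeasurable_of_tendsto_integral h
  -- the laws of `X i`, with a dummy value where `X i` is not a.e. measurable
  let law : ι → ProbabilityMeasure ℝ := fun i =>
    if hX : AEMeasurable (X i) (P i) then ⟨(P i).map (X i), Measure.isProbabilityMeasure_map hX⟩
    else ⟨μ, inferInstance⟩
  have law_of_aemeasurable : ∀ i (hX : AEMeasurable (X i) (P i)),
      (law i : Measure ℝ) = (P i).map (X i) := fun i hX => by simp [law, hX]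
  have hlaw : Tendsto law l (𝓝 ⟨μ, inferInstance⟩) := by
    refine ProbabilityMeasure.tendsto_iff_forall_integral_tendsto.2 fun f => (h f).congr' ?_
    filter_upwards [hmeas] with i hX
    rw [law_of_aemeasurable i hX, integral_map hX f.continuous.aestronglyMeasurable]
  refine (ProbabilityMeasure.tendsto_measure_of_null_frontier_of_tendsto' hlaw hs').congr' ?_
  filter_upwards [hmeas] with i hX
  rw [law_of_aemeasurable i hX, Measure.map_apply_of_aemeasurable hX hs]

end WeakConvergence

lemma measure_Ici_eq_one_sub_measure_Iic (μ : Measure ℝ) [IsProbabilityMeasure μ]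
    [NullSingletonClass μ] (u : ℝ) : μ (Set.Ici u) = 1 - μ (Set.Iic u) := by
  rw [← measure_congr Ioi_ae_eq_Ici, ← Set.compl_Iic, prob_compl_eq_one_sub measurableSet_Iic]

instance : NullSingletonClass (gaussianReal 0 1) := nullSingletonClass_gaussianReal one_ne_zero

lemma gaussianReal_Ici_of_Iic {u α : ℝ} (hα : α ≤ 1)
    (hu : gaussianReal 0 1 (Set.Iic u) = ENNReal.ofReal (1 - α)) :
    gaussianReal 0 1 (Set.Ici u) = ENNReal.ofReal α := by
  rw [measure_Ici_eq_one_sub_measure_Iic, hu, ← ENNReal.ofReal_one,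
    ← ENNReal.ofReal_sub _ (sub_nonneg.2 hα), sub_sub_cancel]

lemma add_mul_div_le_iff_le_mul_sub_div {a m s t u : ℝ} (hs : 0 < s) (ht : 0 < t) :
    a + u * t / s ≤ m ↔ u ≤ s * (m - a) / t := by
  rw [le_div_iff₀ ht, ← le_sub_iff_add_le', div_le_iff₀ hs, mul_comm s]

section RejectionEvent

variable {Ω : Type*} [MeasurableSpace Ω] {P : Measure Ω} {M τ : Ω → ℝ} {a s u : ℝ}

lemma setOf_add_mul_div_le_ae_eq (hτ : ∀ᵐ ω ∂P, 0 < τ ω) (hs : 0 < s) :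
    {ω | M ω ≥ a + u * τ ω / s} =ᵐ[P] {ω | u ≤ s * (M ω - a) / τ ω} := by
  filter_upwards [hτ] with ω hω
  exact propext (add_mul_div_le_iff_le_mul_sub_div hs hω)

lemma measure_setOf_add_mul_div_le_le {b : ℝ} (hτ : ∀ᵐ ω ∂P, 0 < τ ω) (hs : 0 < s)
    (hba : b ≤ a) : P {ω | M ω ≥ a + u * τ ω / s} ≤ P {ω | u ≤ s * (M ω - b) / τ ω} := by
  rw [measure_congr (setOf_add_mul_div_le_ae_eq hτ hs)]
  refine measure_mono_ae ?_
  filter_upwards [hτ] with ω hω hle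
  exact hle.trans (by gcongr)

end RejectionEvent

theorem relevant_test_asymptotic_level_general
    (Ω : ℕ → Type) (mΩ : ∀ n, MeasurableSpace (Ω n))
    (P : ∀ n, Measure (Ω n)) (hP : ∀ n, IsProbabilityMeasure (P n))
    (M τ' : ∀ n, Ω n → ℝ)
    (hτpos : ∀ n, ∀ᵐ ω ∂(P n), 0 < τ' n ω)
    (δ Δ : ℝ) (hδ : 0 < δ) (hδΔ : δ ≤ Δ)
    (α : ℝ) (hα : α ∈ Set.Ioo (0:ℝ) 1)
    (u : ℝ) (hu : (gaussianReal 0 1) (Set.Iic u) = ENNReal.ofReal (1 - α))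
    (hconv : ∀ f : BoundedContinuousFunction ℝ ℝ,
      Tendsto (fun (n : ℕ) =>
          ∫ ω, f (Real.sqrt n * (M n ω - δ ^ 2) / τ' n ω) ∂(P n)) atTop
        (𝓝 (∫ x, f x ∂(gaussianReal 0 1)))) :
    limsup (fun (n : ℕ) =>
        (P n {ω | M n ω ≥ Δ ^ 2 + u * τ' n ω / Real.sqrt n}).toReal) atTop ≤ α
    ∧ (δ = Δ → Tendsto (fun (n : ℕ) =>
        (P n {ω | M n ω ≥ Δ ^ 2 + u * τ' n ω / Real.sqrt n}).toReal) atTop (𝓝 α)) := by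
  have hlimit : Tendsto
      (fun n : ℕ => (P n {ω | u ≤ Real.sqrt n * (M n ω - δ ^ 2) / τ' n ω}).toReal) atTop (𝓝 α) := by
    have h := tendsto_measure_preimage_of_tendsto_integral hconv measurableSet_Ici
      (by rw [frontier_Ici]; exact measure_singleton u)
    rw [gaussianReal_Ici_of_Iic hα.2.le hu] at h
    rw [← ENNReal.toReal_ofReal hα.1.le]
    exact (ENNReal.tendsto_toReal ENNReal.ofReal_ne_top).comp h
  have hsqrt : ∀ᶠ n : ℕ in atTop, 0 < Real.sqrt n :=
    (eventually_ge_atTop 1).mono fun n hn => Real.sqrt_pos.2 (by exact_mod_cast hn)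
  refine ⟨?_, fun hδΔ => hlimit.congr' ?_⟩
  · have hle : ∀ᶠ n : ℕ in atTop, (P n {ω | M n ω ≥ Δ ^ 2 + u * τ' n ω / Real.sqrt n}).toReal ≤
        (P n {ω | u ≤ Real.sqrt n * (M n ω - δ ^ 2) / τ' n ω}).toReal :=
      hsqrt.mono fun n hn => ENNReal.toReal_mono (measure_ne_top _ _)
        (measure_setOf_add_mul_div_le_le (hτpos n) hn (pow_le_pow_left₀ hδ.le hδΔ 2))
    calc _ ≤ _ := limsup_le_limsup hle
          (isCoboundedUnder_le_of_le _ fun _ => ENNReal.toReal_nonneg) hlimit.isBoundedUnder_le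
      _ = α := hlimit.limsup_eq
  · subst hδΔ
    filter_upwards [hsqrt] with n hn
    rw [measure_congr (setOf_add_mul_div_le_ae_eq (hτpos n) hn)]

/-- level part of Theorem 3.2. If `√n(M̂_n - δ²)/τ̂_n` is asymptotically
standard normal and `0 < δ ≤ Δ`, then the rejection probability of the test
`M̂_n ≥ Δ² + u_{1-α} τ̂_n/√n` has limsup at most `α`; for `δ = Δ` it converges to `α`. -/
theorem relevant_test_asymptotic_level
    (Ω : ℕ → Type) (mΩ : ∀ n, MeasurableSpace (Ω n))
    (P : ∀ n, Measure (Ω n)) (hP : ∀ n, IsProbabilityMeasure (P n))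
    (M τ' : ∀ n, Ω n → ℝ)
    (hτpos : ∀ n, ∀ᵐ ω ∂(P n), 0 < τ' n ω)
    (δ Δ : ℝ) (hδ : 0 < δ) (hΔ : 0 < Δ) (hδΔ : δ ≤ Δ)
    (α : ℝ) (hα : α ∈ Set.Ioo (0:ℝ) 1)
    (u : ℝ) (hu : (gaussianReal 0 1) (Set.Iic u) = ENNReal.ofReal (1 - α))
    (hconv : ∀ f : BoundedContinuousFunction ℝ ℝ,
      Tendsto (fun (n : ℕ) =>
          ∫ ω, f (Real.sqrt n * (M n ω - δ ^ 2) / τ' n ω) ∂(P n)) atTop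
        (𝓝 (∫ x, f x ∂(gaussianReal 0 1)))) :
    limsup (fun (n : ℕ) =>
        (P n {ω | M n ω ≥ Δ ^ 2 + u * τ' n ω / Real.sqrt n}).toReal) atTop ≤ α
    ∧ (δ = Δ → Tendsto (fun (n : ℕ) =>
        (P n {ω | M n ω ≥ Δ ^ 2 + u * τ' n ω / Real.sqrt n}).toReal) atTop (𝓝 α)) :=
  relevant_test_asymptotic_level_general Ω mΩ P hP M τ' hτpos δ Δ hδ hδΔ α hα u hu hconv
end

section
/- For each n let Y_n ≥ 0, t̂_n ∈ (0,1) and τ̂_n ≥ 0 be random variables on a probability space (Ω_n, P_n), let Δ > 0, let α ∈ (0, 1/2], and let u_{1−α} ≥ 0 be the (1−α)-quantile of the standard normal distribution. Assume: (i) √n · Y_n converges to 0 in probability, and (ii) t̂_n converges in distribution to a [0,1]-valued random variable T_max with P(T_max ∈ {0,1}) = 0. Define M̂_n = 3 Y_n / (t̂_n(1−t̂_n))². Then lim_{n→∞} P_n( M̂_n ≥ Δ² + u_{1−α} τ̂_n/√n ) = 0. -/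
open MeasureTheory ProbabilityTheory Filter Topology

/-- A continuous bump test function: equals `1` where `x(1-x) ≤ η` and `0` where
`x(1-x) ≥ 2η`. -/
noncomputable def chgptBump (η : ℝ) : BoundedContinuousFunction ℝ ℝ :=
  BoundedContinuousFunction.mkOfBound
    ⟨fun x => max 0 (min 1 (2 - x * (1 - x) / η)),
      continuous_const.max (continuous_const.min
        (continuous_const.sub ((continuous_id.mul
          (continuous_const.sub continuous_id)).div_const η)))⟩
    1
    (by
      intro x y
      have h1 : ∀ z : ℝ, (0:ℝ) ≤ max 0 (min 1 (2 - z * (1 - z) / η)) :=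
        fun z => le_max_left _ _
      have h2 : ∀ z : ℝ, max 0 (min 1 (2 - z * (1 - z) / η)) ≤ 1 :=
        fun z => max_le zero_le_one (min_le_left _ _)
      have hx1 := h1 x; have hy1 := h1 y; have hx2 := h2 x; have hy2 := h2 y
      simp only [ContinuousMap.coe_mk, Real.dist_eq]
      rw [abs_sub_le_iff]
      constructor <;> linarith)

lemma chgptBump_apply (η x : ℝ) :
    chgptBump η x = max 0 (min 1 (2 - x * (1 - x) / η)) := rfl

lemma chgptBump_nonneg (η x : ℝ) : 0 ≤ chgptBump η x := by
  rw [chgptBump_apply]; exact le_max_left _ _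

lemma chgptBump_le_one (η x : ℝ) : chgptBump η x ≤ 1 := by
  rw [chgptBump_apply]; exact max_le zero_le_one (min_le_left _ _)

lemma one_le_chgptBump {η x : ℝ} (hη : 0 < η) (h : x * (1 - x) ≤ η) :
    1 ≤ chgptBump η x := by
  rw [chgptBump_apply]
  have h1 : x * (1 - x) / η ≤ 1 := (div_le_one hη).2 h
  have h2 : (1:ℝ) ≤ 2 - x * (1 - x) / η := by linarith
  exact le_trans (le_min le_rfl h2) (le_max_right _ _)

lemma chgptBump_eq_zero {η x : ℝ} (hη : 0 < η) (h : 2 * η ≤ x * (1 - x)) :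
    chgptBump η x = 0 := by
  rw [chgptBump_apply]
  have h1 : (2:ℝ) ≤ x * (1 - x) / η := (le_div_iff₀ hη).2 (by linarith)
  have h2 : 2 - x * (1 - x) / η ≤ 0 := by linarith
  exact max_eq_left (le_trans (min_le_right _ _) h2)

/-- the `δ = 0` case of Theorem 3.2. If `√n Y_n → 0` in probability and
the change-point estimator `t̂_n` converges in distribution to a `[0,1]`-valued random
variable `T_max` which is almost surely not in `{0,1}`, then the test based on
`M̂_n = 3 Y_n/(t̂_n(1-t̂_n))²` rejects with probability tending to `0`. -/
theorem relevant_test_level_at_zero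
    (Ω : ℕ → Type) (mΩ : ∀ n, MeasurableSpace (Ω n))
    (P : ∀ n, Measure (Ω n)) (hP : ∀ n, IsProbabilityMeasure (P n))
    (Y that τhat : ∀ n, Ω n → ℝ)
    (hY : ∀ n ω, 0 ≤ Y n ω)
    (hthat : ∀ n ω, that n ω ∈ Set.Ioo (0:ℝ) 1)
    (hτhat : ∀ n ω, 0 ≤ τhat n ω)
    (Δ : ℝ) (hΔ : 0 < Δ)
    (α : ℝ) (hα : α ∈ Set.Ioc (0:ℝ) (1/2))
    (u : ℝ) (hu0 : 0 ≤ u)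
    (hu : (gaussianReal 0 1) (Set.Iic u) = ENNReal.ofReal (1 - α))
    (hYconv : ∀ ε > (0:ℝ),
      Tendsto (fun (n : ℕ) => P n {ω | Real.sqrt n * Y n ω > ε}) atTop (𝓝 0))
    (Ω' : Type) (mΩ' : MeasurableSpace Ω') (P' : Measure Ω')
    (hP' : IsProbabilityMeasure P')
    (Tmax : Ω' → ℝ) (hTmeas : Measurable Tmax)
    (hTrange : ∀ ω, Tmax ω ∈ Set.Icc (0:ℝ) 1)
    (hT01 : P' {ω | Tmax ω = 0 ∨ Tmax ω = 1} = 0)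
    (htconv : ∀ f : BoundedContinuousFunction ℝ ℝ,
      Tendsto (fun (n : ℕ) => ∫ ω, f (that n ω) ∂(P n)) atTop
        (𝓝 (∫ ω, f (Tmax ω) ∂P')))
    (M : ∀ n, Ω n → ℝ)
    (hM : ∀ n ω, M n ω = 3 * Y n ω / (that n ω * (1 - that n ω)) ^ 2) :
    Tendsto (fun (n : ℕ) =>
        (P n {ω | M n ω ≥ Δ ^ 2 + u * τhat n ω / Real.sqrt n}).toReal) atTop (𝓝 0) := by
  haveI := hP'
  rw [Metric.tendsto_nhds]
  intro ε hε
  -- continuity from above: the sets where `Tmax (1 - Tmax)` is small have small measure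
  set S : ℕ → Set Ω' := fun k => {ω | Tmax ω * (1 - Tmax ω) < 1 / ((k:ℝ) + 1)} with hS
  have hSmeas : ∀ k, MeasurableSet (S k) :=
    fun k => measurableSet_lt (hTmeas.mul (measurable_const.sub hTmeas)) measurable_const
  have hSanti : Antitone S := by
    intro k m hkm ω hω
    simp only [hS, Set.mem_setOf_eq] at hω ⊢
    refine lt_of_lt_of_le hω ?_
    have hk1 : (0:ℝ) < (k:ℝ) + 1 := by positivity
    have hkm' : (k:ℝ) + 1 ≤ (m:ℝ) + 1 := by
      have : (k:ℝ) ≤ m := Nat.cast_le.2 hkm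
      linarith
    exact one_div_le_one_div_of_le hk1 hkm'
  have hSiInter : (⋂ k, S k) = {ω | Tmax ω = 0 ∨ Tmax ω = 1} := by
    ext ω
    simp only [Set.mem_iInter, hS, Set.mem_setOf_eq]
    constructor
    · intro h
      have hv0 : Tmax ω * (1 - Tmax ω) ≤ 0 := by
        by_contra hv
        push_neg at hv
        obtain ⟨k, hk⟩ := exists_nat_one_div_lt hv
        exact absurd (h k) (not_lt.2 hk.le)
      have hr := hTrange ω
      have hv1 : 0 ≤ Tmax ω * (1 - Tmax ω) :=
        mul_nonneg hr.1 (by linarith [hr.2])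
      have : Tmax ω * (1 - Tmax ω) = 0 := le_antisymm hv0 hv1
      rcases mul_eq_zero.1 this with h0 | h1
      · exact Or.inl h0
      · exact Or.inr (by linarith)
    · intro h k
      have : Tmax ω * (1 - Tmax ω) = 0 := by
        rcases h with h0 | h1
        · rw [h0]; ring
        · rw [h1]; ring
      rw [this]
      positivity
  have hlim : Tendsto (fun k => P' (S k)) atTop (𝓝 0) := by
    have := tendsto_measure_iInter_atTop (fun k => (hSmeas k).nullMeasurableSet)
      hSanti ⟨0, measure_ne_top P' _⟩
    rwa [hSiInter, hT01] at this
  have hε4 : (0:ENNReal) < ENNReal.ofReal (ε/4) := ENNReal.ofReal_pos.2 (by linarith)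
  obtain ⟨k, hk⟩ := (hlim.eventually_lt_const hε4).exists
  -- choose the parameter of the bump
  set η : ℝ := 1 / (2 * ((k:ℝ) + 1)) with hηdef
  have hη : 0 < η := by positivity
  have h2η : 2 * η = 1 / ((k:ℝ) + 1) := by rw [hηdef]; field_simp
  -- the limit integral is small
  have hint' : Integrable (fun ω => chgptBump η (Tmax ω)) P' := by
    refine Integrable.mono' (integrable_const 1)
      (((chgptBump η).continuous.measurable.comp hTmeas).aestronglyMeasurable) ?_
    exact Eventually.of_forall fun ω => by
      rw [Real.norm_eq_abs, abs_of_nonneg (chgptBump_nonneg _ _)]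
      exact chgptBump_le_one _ _
  have hL : (∫ ω, chgptBump η (Tmax ω) ∂P') < ε/4 := by
    have hle : (∫ ω, chgptBump η (Tmax ω) ∂P')
        ≤ ∫ ω, (S k).indicator (fun _ => (1:ℝ)) ω ∂P' := by
      refine integral_mono hint' ((integrable_const (1:ℝ)).indicator (hSmeas k)) ?_
      intro ω
      by_cases hω : ω ∈ S k
      · rw [Set.indicator_of_mem hω]; exact chgptBump_le_one _ _
      · rw [Set.indicator_of_notMem hω]
        show chgptBump η (Tmax ω) ≤ 0
        have : 2 * η ≤ Tmax ω * (1 - Tmax ω) := by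
          rw [h2η]; exact not_lt.1 hω
        rw [chgptBump_eq_zero hη this]
        
    rw [integral_indicator_const (1:ℝ) (hSmeas k), smul_eq_mul, mul_one] at hle
    exact lt_of_le_of_lt hle (ENNReal.toReal_lt_of_lt_ofReal hk)
  -- eventual a.e.-strong measurability of the composed bump
  have hAESM : ∀ᶠ n in atTop,
      AEStronglyMeasurable (fun ω => chgptBump η (that n ω)) (P n) := by
    by_contra hcon
    rw [Filter.not_eventually] at hcon
    set h : BoundedContinuousFunction ℝ ℝ :=
      BoundedContinuousFunction.const ℝ (1:ℝ) - chgptBump η with hhdef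
    have hhapp : ∀ x, h x = 1 - chgptBump η x := fun x => by
      simp [hhdef]
    have hz1 : (∫ ω, chgptBump η (Tmax ω) ∂P') ∈ closure ({0} : Set ℝ) := by
      refine mem_closure_of_frequently_of_tendsto ?_ (htconv (chgptBump η))
      refine hcon.mono fun n hn => ?_
      have : ¬ Integrable (fun ω => chgptBump η (that n ω)) (P n) :=
        fun hi => hn hi.1
      simpa using integral_undef this
    have hz2 : (∫ ω, h (Tmax ω) ∂P') ∈ closure ({0} : Set ℝ) := by
      refine mem_closure_of_frequently_of_tendsto ?_ (htconv h)
      refine hcon.mono fun n hn => ?_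
      have : ¬ Integrable (fun ω => h (that n ω)) (P n) := by
        intro hi
        apply hn
        have h1 : AEStronglyMeasurable (fun ω => h (that n ω)) (P n) := hi.1
        have h2 : AEStronglyMeasurable
            (fun ω => 1 - h (that n ω)) (P n) := aestronglyMeasurable_const.sub h1
        have : (fun ω => 1 - h (that n ω)) = fun ω => chgptBump η (that n ω) := by
          funext ω; rw [hhapp]; ring
        rwa [this] at h2
      simpa using integral_undef this
    rw [isClosed_singleton.closure_eq, Set.mem_singleton_iff] at hz1 hz2
    have hInth : (∫ ω, h (Tmax ω) ∂P') = 1 - ∫ ω, chgptBump η (Tmax ω) ∂P' := by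
      have : (fun ω => h (Tmax ω)) = fun ω => 1 - chgptBump η (Tmax ω) := by
        funext ω; rw [hhapp]
      rw [this, integral_sub (integrable_const 1) hint', integral_const]
      simp
    rw [hInth, hz1] at hz2
    norm_num at hz2
  -- eventual smallness of the integrals along the sequence
  have hε3 : (∫ ω, chgptBump η (Tmax ω) ∂P') < ε/3 := by linarith
  have hE1 : ∀ᶠ n in atTop,
      (∫ ω, chgptBump η (that n ω) ∂(P n)) < ε/3 :=
    (htconv (chgptBump η)).eventually_lt_const hε3
  have hE3 : ∀ᶠ n in atTop,
      P n {ω | Real.sqrt n * Y n ω > 1} < ENNReal.ofReal (ε/3) :=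
    (hYconv 1 one_pos).eventually_lt_const (ENNReal.ofReal_pos.2 (by linarith))
  set c : ℝ := Δ^2 * η^2 / 3 with hcdef
  have hc : 0 < c := by positivity
  obtain ⟨N, hN⟩ := exists_nat_gt ((1/c)^2)
  filter_upwards [hE1, hAESM, hE3, eventually_ge_atTop N] with n h1 h2 h3 h4
  haveI := hP n
  -- the inclusion of events
  set A : Set (Ω n) := {ω | M n ω ≥ Δ ^ 2 + u * τhat n ω / Real.sqrt n} with hA
  set B : Set (Ω n) := {ω | Real.sqrt n * Y n ω > 1} with hB
  set C : Set (Ω n) := {ω | that n ω * (1 - that n ω) < η} with hC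
  have hsub : A ⊆ B ∪ C := by
    intro ω hω
    by_cases hCmem : that n ω * (1 - that n ω) < η
    · exact Or.inr hCmem
    · left
      push_neg at hCmem
      have hv : 0 < that n ω * (1 - that n ω) := lt_of_lt_of_le hη hCmem
      have hnn : 0 ≤ u * τhat n ω / Real.sqrt n :=
        div_nonneg (mul_nonneg hu0 (hτhat n ω)) (Real.sqrt_nonneg n)
      have hω' : Δ ^ 2 + u * τhat n ω / Real.sqrt n ≤ M n ω := hω
      have hM' : Δ^2 ≤ 3 * Y n ω / (that n ω * (1 - that n ω))^2 := by
        rw [← hM n ω]; linarith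
      have hq : 0 < (that n ω * (1 - that n ω))^2 := pow_pos hv 2
      have h3Y : Δ^2 * (that n ω * (1 - that n ω))^2 ≤ 3 * Y n ω :=
        (le_div_iff₀ hq).1 hM'
      have hq2 : η^2 ≤ (that n ω * (1 - that n ω))^2 :=
        pow_le_pow_left₀ hη.le hCmem 2
      have hYc : c ≤ Y n ω := by
        rw [hcdef]
        rw [div_le_iff₀ (by norm_num : (0:ℝ) < 3)]
        nlinarith [sq_nonneg Δ]
      have hsn : 1/c < Real.sqrt n := by
        have hlt : (1/c)^2 < (n:ℝ) := lt_of_lt_of_le hN (Nat.cast_le.2 h4)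
        calc 1/c = Real.sqrt ((1/c)^2) := (Real.sqrt_sq (by positivity)).symm
          _ < Real.sqrt n := Real.sqrt_lt_sqrt (by positivity) hlt
      show Real.sqrt n * Y n ω > 1
      have e1 : Real.sqrt n * c ≤ Real.sqrt n * Y n ω :=
        mul_le_mul_of_nonneg_left hYc (Real.sqrt_nonneg n)
      have e2 : (1/c) * c < Real.sqrt n * c := mul_lt_mul_of_pos_right hsn hc
      have e3 : (1/c) * c = 1 := one_div_mul_cancel (ne_of_gt hc)
      linarith
  -- bound the measure of `C` via the Markov inequality for the bump function
  have hintn : Integrable (fun ω => chgptBump η (that n ω)) (P n) := by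
    refine Integrable.mono' (integrable_const 1) h2 ?_
    exact Eventually.of_forall fun ω => by
      rw [Real.norm_eq_abs, abs_of_nonneg (chgptBump_nonneg _ _)]
      exact chgptBump_le_one _ _
  have hPC : P n C ≤ ENNReal.ofReal (ε/3) := by
    have hAEM : AEMeasurable (fun ω => ENNReal.ofReal (chgptBump η (that n ω))) (P n) :=
      ENNReal.measurable_ofReal.comp_aemeasurable h2.aemeasurable
    have hmarkov := mul_meas_ge_le_lintegral₀ hAEM 1
    rw [one_mul] at hmarkov
    have hCsub : C ⊆ {ω | 1 ≤ ENNReal.ofReal (chgptBump η (that n ω))} := by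
      intro ω hω
      simp only [Set.mem_setOf_eq]
      rw [show (1:ENNReal) = ENNReal.ofReal 1 by simp]
      exact ENNReal.ofReal_le_ofReal (one_le_chgptBump hη hω.le)
    have hle : P n C ≤ ∫⁻ ω, ENNReal.ofReal (chgptBump η (that n ω)) ∂(P n) :=
      le_trans (measure_mono hCsub) hmarkov
    rw [← ofReal_integral_eq_lintegral_ofReal hintn
      (Eventually.of_forall fun ω => chgptBump_nonneg _ _)] at hle
    exact le_trans hle (ENNReal.ofReal_le_ofReal h1.le)
  have hPA : P n A ≤ ENNReal.ofReal (ε/3) + ENNReal.ofReal (ε/3) :=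
    le_trans (measure_mono hsub)
      (le_trans (measure_union_le _ _) (add_le_add h3.le hPC))
  rw [← ENNReal.ofReal_add (by linarith) (by linarith)] at hPA
  have htr : (P n A).toReal ≤ ε/3 + ε/3 := by
    have := ENNReal.toReal_mono ENNReal.ofReal_ne_top hPA
    rwa [ENNReal.toReal_ofReal (by linarith)] at this
  rw [dist_zero_right, Real.norm_eq_abs, abs_of_nonneg ENNReal.toReal_nonneg]
  linarith
end

section
/- For every t ∈ [0,1], ∫₀¹ ∫₀¹ (min(s1,t) − s1 t)(min(s2,t) − s2 t) · [ min(s1, s2, t) + s1 s2 t − s2·min(s1,t) − s1·min(s2,t) ] ds1 ds2 = t³(1−t)²(5 − 10t + 6t²)/45. -/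
/-!
The integrand is a polynomial on each cell cut out of `[0,1]²` by the relative order of `s1`, `s2`
and `t`. Integrating out `s2` therefore gives a piecewise polynomial in `s1`:
`(t/3 - 7t²/6 + 5t³/3 - 7t⁴/6 + t⁵/3) s1² - (1-t)² s1⁴/6` for `s1 ≤ t` and
`t³(1-t)²(1-s1)²/3` for `t ≤ s1`, and integrating these over `[0,t]` and `[t,1]` gives the result.
-/

open intervalIntegral Set Function MeasureTheory

lemma integral_eq_quartic_of_eqOn {f : ℝ → ℝ} {a b : ℝ} (hab : a ≤ b) (c₀ c₁ c₂ c₃ c₄ : ℝ)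
    (hf : ∀ x ∈ Icc a b, f x = c₀ + c₁ * x + c₂ * x ^ 2 + c₃ * x ^ 3 + c₄ * x ^ 4) :
    ∫ x in a..b, f x =
      (c₀ * b + c₁ * b ^ 2 / 2 + c₂ * b ^ 3 / 3 + c₃ * b ^ 4 / 4 + c₄ * b ^ 5 / 5) -
        (c₀ * a + c₁ * a ^ 2 / 2 + c₂ * a ^ 3 / 3 + c₃ * a ^ 4 / 4 + c₄ * a ^ 5 / 5) := by
  rw [integral_congr (g := fun x => c₀ + c₁ * x + c₂ * x ^ 2 + c₃ * x ^ 3 + c₄ * x ^ 4)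
    (by rwa [uIcc_of_le hab])]
  have hF (x : ℝ) : HasDerivAt
      (fun y => c₀ * y + c₁ * y ^ 2 / 2 + c₂ * y ^ 3 / 3 + c₃ * y ^ 4 / 4 + c₄ * y ^ 5 / 5)
      (c₀ + c₁ * x + c₂ * x ^ 2 + c₃ * x ^ 3 + c₄ * x ^ 4) x := by
    have h := (((((hasDerivAt_id' x).const_mul c₀).add
      (((hasDerivAt_pow 2 x).const_mul c₁).div_const 2)).add
      (((hasDerivAt_pow 3 x).const_mul c₂).div_const 3)).add
      (((hasDerivAt_pow 4 x).const_mul c₃).div_const 4)).add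
      (((hasDerivAt_pow 5 x).const_mul c₄).div_const 5)
    exact h.congr_deriv (by push_cast; ring)
  exact integral_eq_sub_of_hasDerivAt (fun x _ => hF x) ((by fun_prop :
    Continuous fun x : ℝ => c₀ + c₁ * x + c₂ * x ^ 2 + c₃ * x ^ 3 + c₄ * x ^ 4).intervalIntegrable a b)

/-- Drift of the CUSUM process under a change-point at `t`. -/
def cusumDrift (t s : ℝ) : ℝ := min s t - s * t

/-- The coefficient of the pre-change long-run covariance in the kernel `d_{F₁,F₂,t}(s1,s2)`. -/
def prechangeKernel (t s1 s2 : ℝ) : ℝ :=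
  min (min s1 s2) t + s1 * s2 * t - s2 * min s1 t - s1 * min s2 t

def prechangeIntegrand (t s1 s2 : ℝ) : ℝ :=
  cusumDrift t s1 * cusumDrift t s2 * prechangeKernel t s1 s2

lemma continuous_uncurry_prechangeIntegrand (t : ℝ) :
    Continuous (uncurry (prechangeIntegrand t)) := by
  unfold prechangeIntegrand cusumDrift prechangeKernel uncurry
  fun_prop

lemma intervalIntegrable_prechangeIntegrand (t s1 a b : ℝ) :
    IntervalIntegrable (prechangeIntegrand t s1) volume a b :=
  ((continuous_uncurry_prechangeIntegrand t).uncurry_left s1).intervalIntegrable a b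

lemma integral_prechangeIntegrand_of_le {t s1 : ℝ} (h0 : 0 ≤ s1) (h1 : s1 ≤ t) (h2 : t ≤ 1) :
    ∫ s2 in (0:ℝ)..1, prechangeIntegrand t s1 s2 =
      (t / 3 - 7 * t ^ 2 / 6 + 5 * t ^ 3 / 3 - 7 * t ^ 4 / 6 + t ^ 5 / 3) * s1 ^ 2 -
        (1 - t) ^ 2 / 6 * s1 ^ 4 := by
  have hi := intervalIntegrable_prechangeIntegrand t s1
  rw [← integral_add_adjacent_intervals (hi 0 s1) (hi s1 1),
    ← integral_add_adjacent_intervals (hi s1 t) (hi t 1),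
    integral_eq_quartic_of_eqOn h0 0 0 ((s1 - s1 * t) * (1 - t) * (1 + s1 * t - 2 * s1)) 0 0
      fun x hx => by
        simp only [prechangeIntegrand, cusumDrift, prechangeKernel]
        rw [min_eq_right hx.2, min_eq_left (hx.2.trans h1), min_eq_left h1]
        ring,
    integral_eq_quartic_of_eqOn h1 0 (s1 ^ 2 * (1 - t) ^ 2) (s1 ^ 2 * (1 - t) ^ 2 * (t - 2)) 0 0
      fun x hx => by
        simp only [prechangeIntegrand, cusumDrift, prechangeKernel]
        rw [min_eq_left hx.1, min_eq_left h1, min_eq_left hx.2]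
        ring,
    integral_eq_quartic_of_eqOn h2 (s1 ^ 2 * t * (1 - t) ^ 2) (-2 * s1 ^ 2 * t * (1 - t) ^ 2)
      (s1 ^ 2 * t * (1 - t) ^ 2) 0 0
      fun x hx => by
        simp only [prechangeIntegrand, cusumDrift, prechangeKernel]
        rw [min_eq_left (h1.trans hx.1), min_eq_left h1, min_eq_right hx.1]
        ring]
  ring

lemma integral_prechangeIntegrand_of_ge {t s1 : ℝ} (h0 : 0 ≤ t) (h1 : t ≤ s1) (h2 : s1 ≤ 1) :
    ∫ s2 in (0:ℝ)..1, prechangeIntegrand t s1 s2 = t ^ 3 * (1 - t) ^ 2 * (1 - s1) ^ 2 / 3 := by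
  have hi := intervalIntegrable_prechangeIntegrand t s1
  rw [← integral_add_adjacent_intervals (hi 0 t) (hi t 1),
    integral_eq_quartic_of_eqOn h0 0 0 (t * (1 - s1) ^ 2 * (1 - t) ^ 2) 0 0
      fun x hx => by
        simp only [prechangeIntegrand, cusumDrift, prechangeKernel]
        rw [min_eq_right (hx.2.trans h1), min_eq_left hx.2, min_eq_right h1]
        ring,
    integral_eq_quartic_of_eqOn (h1.trans h2) (t ^ 3 * (1 - s1) ^ 2) (-2 * t ^ 3 * (1 - s1) ^ 2)
      (t ^ 3 * (1 - s1) ^ 2) 0 0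
      fun x hx => by
        simp only [prechangeIntegrand, cusumDrift, prechangeKernel]
        rw [min_eq_right (le_min h1 hx.1), min_eq_right hx.1, min_eq_right h1]
        ring]
  ring

/-- For every `t ∈ [0,1]`,
`∫₀¹∫₀¹ (min(s1,t) - s1 t)(min(s2,t) - s2 t)[min(s1,s2,t) + s1 s2 t - s2 min(s1,t)
  - s1 min(s2,t)] ds1 ds2 = t³(1-t)²(5 - 10t + 6t²)/45`. -/
theorem double_integral_prechange_kernel (t : ℝ) (ht : t ∈ Set.Icc (0:ℝ) 1) :
    (∫ s1 in (0:ℝ)..1, ∫ s2 in (0:ℝ)..1,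
      (min s1 t - s1 * t) * (min s2 t - s2 * t) *
        (min (min s1 s2) t + s1 * s2 * t - s2 * min s1 t - s1 * min s2 t))
      = t ^ 3 * (1 - t) ^ 2 * (5 - 10 * t + 6 * t ^ 2) / 45 := by
  obtain ⟨ht0, ht1⟩ := ht
  change ∫ s1 in (0:ℝ)..1, ∫ s2 in (0:ℝ)..1, prechangeIntegrand t s1 s2 = _
  have hi (a b : ℝ) :
      IntervalIntegrable (fun s1 => ∫ s2 in (0:ℝ)..1, prechangeIntegrand t s1 s2)
        volume a b :=
    (continuous_parametric_intervalIntegral_of_continuous'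
      (continuous_uncurry_prechangeIntegrand t) 0 1).intervalIntegrable a b
  rw [← integral_add_adjacent_intervals (hi 0 t) (hi t 1),
    integral_eq_quartic_of_eqOn ht0 0 0
      (t / 3 - 7 * t ^ 2 / 6 + 5 * t ^ 3 / 3 - 7 * t ^ 4 / 6 + t ^ 5 / 3) 0 (-(1 - t) ^ 2 / 6)
      fun s1 hs1 => by rw [integral_prechangeIntegrand_of_le hs1.1 hs1.2 ht1]; ring,
    integral_eq_quartic_of_eqOn ht1 (t ^ 3 * (1 - t) ^ 2 / 3) (-2 * t ^ 3 * (1 - t) ^ 2 / 3)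
      (t ^ 3 * (1 - t) ^ 2 / 3) 0 0
      fun s1 hs1 => by rw [integral_prechangeIntegrand_of_ge ht0 hs1.1 hs1.2]; ring]
  ring
end

section
/- Let t ∈ (0,1), let V1, V2 be k×k real matrices and δ ∈ ℝ^k. Define the kernel d(s1,s2) = { min(s1,s2,t) + s1 s2 t − s2·min(s1,t) − s1·min(s2,t) }·V1 + { max(min(s1,s2) − t, 0) + s1 s2 (1−t) − s1·max(s2−t,0) − s2·max(s1−t,0) }·V2 and the matrix Γ = ∫₀¹∫₀¹ (min(s1,t) − s1 t)(min(s2,t) − s2 t)·d(s1,s2) ds1 ds2. Then (36/(t(1−t))⁴)·δᵀ Γ δ = (4/(5 t²(1−t)²))·δᵀ[ t(5 − 10t + 6t²)·V1 + (1 − 3t + 8t² − 6t³)·V2 ]δ. -/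
open MeasureTheory intervalIntegral

private lemma ip (lo hi c0 c1 c2 c3 c4 : ℝ) :
    (∫ x in lo..hi, (c0 + c1*x + c2*x^2 + c3*x^3 + c4*x^4)) =
      (c0*hi + c1/2*hi^2 + c2/3*hi^3 + c3/4*hi^4 + c4/5*hi^5)
      - (c0*lo + c1/2*lo^2 + c2/3*lo^3 + c3/4*lo^4 + c4/5*lo^5) := by
  have h : ∀ x ∈ Set.uIcc lo hi, HasDerivAt
      (fun y : ℝ => c0*y + c1/2*y^2 + c2/3*y^3 + c3/4*y^4 + c4/5*y^5)
      (c0 + c1*x + c2*x^2 + c3*x^3 + c4*x^4) x := by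
    intro x _
    have h1 : HasDerivAt (fun y : ℝ => c0*y) (c0*1) x := (hasDerivAt_id x).const_mul c0
    have h2 := (hasDerivAt_pow 2 x).const_mul (c1/2)
    have h3 := (hasDerivAt_pow 3 x).const_mul (c2/3)
    have h4 := (hasDerivAt_pow 4 x).const_mul (c3/4)
    have h5 := (hasDerivAt_pow 5 x).const_mul (c4/5)
    have H := (((h1.add h2).add h3).add h4).add h5
    have hv : c0*1 + c1/2*(↑(2:ℕ)*x^(2-1)) + c2/3*(↑(3:ℕ)*x^(3-1)) + c3/4*(↑(4:ℕ)*x^(4-1))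
        + c4/5*(↑(5:ℕ)*x^(5-1)) = c0 + c1*x + c2*x^2 + c3*x^3 + c4*x^4 := by
      push_cast; ring
    exact hv ▸ H
  rw [integral_eq_sub_of_hasDerivAt h (by apply Continuous.intervalIntegrable; fun_prop)]

private lemma inner_low (t v1 v2 : ℝ) (ht0 : 0 < t) (ht1 : t < 1) (a : ℝ)
    (ha0 : 0 ≤ a) (hat : a ≤ t) :
    (∫ x in (0:ℝ)..1,
      (min a t - a * t) * (min x t - x * t) *
      ((min (min a x) t + a * x * t - x * min a t - a * min x t) * v1
        + (max (min a x - t) 0 + a * x * (1 - t) - a * max (x - t) 0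
            - x * max (a - t) 0) * v2))
    = (((0 : ℝ)) * v1 + ((0 : ℝ)) * v2) + (((0 : ℝ)) * v1 + ((0 : ℝ)) * v2)*a + (((1/3 : ℝ)*t + (-7/6 : ℝ)*t^2 + (5/3 : ℝ)*t^3 + (-7/6 : ℝ)*t^4 + (1/3 : ℝ)*t^5) * v1 + ((1/3 : ℝ)*t^2 + (-1 : ℝ)*t^3 + (1 : ℝ)*t^4 + (-1/3 : ℝ)*t^5) * v2)*a^2 + (((0 : ℝ)) * v1 + ((0 : ℝ)) * v2)*a^3 + (((-1/6 : ℝ) + (1/3 : ℝ)*t + (-1/6 : ℝ)*t^2) * v1 + ((0 : ℝ)) * v2)*a^4 := by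
  have e1 : Set.EqOn (fun x : ℝ =>
      (min a t - a * t) * (min x t - x * t) *
      ((min (min a x) t + a * x * t - x * min a t - a * min x t) * v1
        + (max (min a x - t) 0 + a * x * (1 - t) - a * max (x - t) 0
            - x * max (a - t) 0) * v2))
      (fun x : ℝ => (((0 : ℝ)) * v1 + ((0 : ℝ)) * v2) + (((0 : ℝ)) * v1 + ((0 : ℝ)) * v2)*x + (((1 : ℝ)*a + (-2 : ℝ)*a*t + (1 : ℝ)*a*t^2 + (-2 : ℝ)*a^2 + (5 : ℝ)*a^2*t + (-4 : ℝ)*a^2*t^2 + (1 : ℝ)*a^2*t^3) * v1 + ((1 : ℝ)*a^2 + (-3 : ℝ)*a^2*t + (3 : ℝ)*a^2*t^2 + (-1 : ℝ)*a^2*t^3) * v2)*x^2 + (((0 : ℝ)) * v1 + ((0 : ℝ)) * v2)*x^3 + (((0 : ℝ)) * v1 + ((0 : ℝ)) * v2)*x^4) (Set.uIcc (0:ℝ) a) := by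
    intro x hx
    rw [Set.uIcc_of_le (ha0)] at hx
    obtain ⟨hx1, hx2⟩ := hx
    dsimp only
    rw [min_eq_right (show x ≤ a by linarith), min_eq_left (show x ≤ t by linarith), min_eq_left (show a ≤ t by linarith), max_eq_right (show x - t ≤ (0:ℝ) by linarith), max_eq_right (show a - t ≤ (0:ℝ) by linarith)]
    ring
  have e2 : Set.EqOn (fun x : ℝ =>
      (min a t - a * t) * (min x t - x * t) *
      ((min (min a x) t + a * x * t - x * min a t - a * min x t) * v1
        + (max (min a x - t) 0 + a * x * (1 - t) - a * max (x - t) 0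
            - x * max (a - t) 0) * v2))
      (fun x : ℝ => (((0 : ℝ)) * v1 + ((0 : ℝ)) * v2) + (((1 : ℝ)*a^2 + (-2 : ℝ)*a^2*t + (1 : ℝ)*a^2*t^2) * v1 + ((0 : ℝ)) * v2)*x + (((-2 : ℝ)*a^2 + (5 : ℝ)*a^2*t + (-4 : ℝ)*a^2*t^2 + (1 : ℝ)*a^2*t^3) * v1 + ((1 : ℝ)*a^2 + (-3 : ℝ)*a^2*t + (3 : ℝ)*a^2*t^2 + (-1 : ℝ)*a^2*t^3) * v2)*x^2 + (((0 : ℝ)) * v1 + ((0 : ℝ)) * v2)*x^3 + (((0 : ℝ)) * v1 + ((0 : ℝ)) * v2)*x^4) (Set.uIcc a t) := by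
    intro x hx
    rw [Set.uIcc_of_le (hat)] at hx
    obtain ⟨hx1, hx2⟩ := hx
    dsimp only
    rw [min_eq_left (show a ≤ x by linarith), min_eq_left (show x ≤ t by linarith), min_eq_left (show a ≤ t by linarith), max_eq_right (show x - t ≤ (0:ℝ) by linarith), max_eq_right (show a - t ≤ (0:ℝ) by linarith)]
    ring
  have e3 : Set.EqOn (fun x : ℝ =>
      (min a t - a * t) * (min x t - x * t) *
      ((min (min a x) t + a * x * t - x * min a t - a * min x t) * v1
        + (max (min a x - t) 0 + a * x * (1 - t) - a * max (x - t) 0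
            - x * max (a - t) 0) * v2))
      (fun x : ℝ => (((1 : ℝ)*a^2*t + (-2 : ℝ)*a^2*t^2 + (1 : ℝ)*a^2*t^3) * v1 + ((1 : ℝ)*a^2*t^2 + (-1 : ℝ)*a^2*t^3) * v2) + (((-2 : ℝ)*a^2*t + (4 : ℝ)*a^2*t^2 + (-2 : ℝ)*a^2*t^3) * v1 + ((-2 : ℝ)*a^2*t^2 + (2 : ℝ)*a^2*t^3) * v2)*x + (((1 : ℝ)*a^2*t + (-2 : ℝ)*a^2*t^2 + (1 : ℝ)*a^2*t^3) * v1 + ((1 : ℝ)*a^2*t^2 + (-1 : ℝ)*a^2*t^3) * v2)*x^2 + (((0 : ℝ)) * v1 + ((0 : ℝ)) * v2)*x^3 + (((0 : ℝ)) * v1 + ((0 : ℝ)) * v2)*x^4) (Set.uIcc t (1:ℝ)) := by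
    intro x hx
    rw [Set.uIcc_of_le (ht1.le)] at hx
    obtain ⟨hx1, hx2⟩ := hx
    dsimp only
    rw [min_eq_left (show a ≤ x by linarith), min_eq_right (show t ≤ x by linarith), min_eq_left (show a ≤ t by linarith), max_eq_left (show (0:ℝ) ≤ x - t by linarith), max_eq_right (show a - t ≤ (0:ℝ) by linarith)]
    ring
  have hc : Continuous (fun x : ℝ =>
      (min a t - a * t) * (min x t - x * t) *
      ((min (min a x) t + a * x * t - x * min a t - a * min x t) * v1
        + (max (min a x - t) 0 + a * x * (1 - t) - a * max (x - t) 0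
            - x * max (a - t) 0) * v2)) := by fun_prop
  have i1 : IntervalIntegrable (fun x : ℝ =>
      (min a t - a * t) * (min x t - x * t) *
      ((min (min a x) t + a * x * t - x * min a t - a * min x t) * v1
        + (max (min a x - t) 0 + a * x * (1 - t) - a * max (x - t) 0
            - x * max (a - t) 0) * v2)) volume 0 a := hc.intervalIntegrable _ _
  have i2 : IntervalIntegrable (fun x : ℝ =>
      (min a t - a * t) * (min x t - x * t) *
      ((min (min a x) t + a * x * t - x * min a t - a * min x t) * v1
        + (max (min a x - t) 0 + a * x * (1 - t) - a * max (x - t) 0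
            - x * max (a - t) 0) * v2)) volume a t := hc.intervalIntegrable _ _
  have i3 : IntervalIntegrable (fun x : ℝ =>
      (min a t - a * t) * (min x t - x * t) *
      ((min (min a x) t + a * x * t - x * min a t - a * min x t) * v1
        + (max (min a x - t) 0 + a * x * (1 - t) - a * max (x - t) 0
            - x * max (a - t) 0) * v2)) volume 0 t := hc.intervalIntegrable _ _
  have i4 : IntervalIntegrable (fun x : ℝ =>
      (min a t - a * t) * (min x t - x * t) *
      ((min (min a x) t + a * x * t - x * min a t - a * min x t) * v1
        + (max (min a x - t) 0 + a * x * (1 - t) - a * max (x - t) 0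
            - x * max (a - t) 0) * v2)) volume t 1 := hc.intervalIntegrable _ _
  rw [← integral_add_adjacent_intervals i3 i4, ← integral_add_adjacent_intervals i1 i2,
    integral_congr e1, integral_congr e2, integral_congr e3, ip, ip, ip]
  ring

private lemma inner_high (t v1 v2 : ℝ) (ht0 : 0 < t) (ht1 : t < 1) (a : ℝ)
    (hta : t ≤ a) (ha1 : a ≤ 1) :
    (∫ x in (0:ℝ)..1,
      (min a t - a * t) * (min x t - x * t) *
      ((min (min a x) t + a * x * t - x * min a t - a * min x t) * v1
        + (max (min a x - t) 0 + a * x * (1 - t) - a * max (x - t) 0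
            - x * max (a - t) 0) * v2))
    = (((1/3 : ℝ)*t^3 + (-2/3 : ℝ)*t^4 + (1/3 : ℝ)*t^5) * v1 + ((-1/3 : ℝ)*t^3 + (1/2 : ℝ)*t^4 + (-1/3 : ℝ)*t^5) * v2) + (((-2/3 : ℝ)*t^3 + (4/3 : ℝ)*t^4 + (-2/3 : ℝ)*t^5) * v1 + ((1/3 : ℝ)*t^2 + (2/3 : ℝ)*t^3 + (-1 : ℝ)*t^4 + (2/3 : ℝ)*t^5) * v2)*a + (((1/3 : ℝ)*t^3 + (-2/3 : ℝ)*t^4 + (1/3 : ℝ)*t^5) * v1 + ((-5/6 : ℝ)*t^2 + (-1/3 : ℝ)*t^3 + (1/2 : ℝ)*t^4 + (-1/3 : ℝ)*t^5) * v2)*a^2 + (((0 : ℝ)) * v1 + ((2/3 : ℝ)*t^2) * v2)*a^3 + (((0 : ℝ)) * v1 + ((-1/6 : ℝ)*t^2) * v2)*a^4 := by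
  have e1 : Set.EqOn (fun x : ℝ =>
      (min a t - a * t) * (min x t - x * t) *
      ((min (min a x) t + a * x * t - x * min a t - a * min x t) * v1
        + (max (min a x - t) 0 + a * x * (1 - t) - a * max (x - t) 0
            - x * max (a - t) 0) * v2))
      (fun x : ℝ => (((0 : ℝ)) * v1 + ((0 : ℝ)) * v2) + (((0 : ℝ)) * v1 + ((0 : ℝ)) * v2)*x + (((1 : ℝ)*t + (-2 : ℝ)*t^2 + (1 : ℝ)*t^3 + (-2 : ℝ)*a*t + (4 : ℝ)*a*t^2 + (-2 : ℝ)*a*t^3 + (1 : ℝ)*a^2*t + (-2 : ℝ)*a^2*t^2 + (1 : ℝ)*a^2*t^3) * v1 + ((1 : ℝ)*t^2 + (-1 : ℝ)*t^3 + (-2 : ℝ)*a*t^2 + (2 : ℝ)*a*t^3 + (1 : ℝ)*a^2*t^2 + (-1 : ℝ)*a^2*t^3) * v2)*x^2 + (((0 : ℝ)) * v1 + ((0 : ℝ)) * v2)*x^3 + (((0 : ℝ)) * v1 + ((0 : ℝ)) * v2)*x^4) (Set.uIcc (0:ℝ) t) := by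
    intro x hx
    rw [Set.uIcc_of_le (ht0.le)] at hx
    obtain ⟨hx1, hx2⟩ := hx
    dsimp only
    rw [min_eq_right (show x ≤ a by linarith), min_eq_left (show x ≤ t by linarith), min_eq_right (show t ≤ a by linarith), max_eq_right (show x - t ≤ (0:ℝ) by linarith), max_eq_left (show (0:ℝ) ≤ a - t by linarith)]
    ring
  have e2 : Set.EqOn (fun x : ℝ =>
      (min a t - a * t) * (min x t - x * t) *
      ((min (min a x) t + a * x * t - x * min a t - a * min x t) * v1
        + (max (min a x - t) 0 + a * x * (1 - t) - a * max (x - t) 0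
            - x * max (a - t) 0) * v2))
      (fun x : ℝ => (((1 : ℝ)*t^3 + (-2 : ℝ)*a*t^3 + (1 : ℝ)*a^2*t^3) * v1 + ((-1 : ℝ)*t^3 + (2 : ℝ)*a*t^3 + (-1 : ℝ)*a^2*t^3) * v2) + (((-2 : ℝ)*t^3 + (4 : ℝ)*a*t^3 + (-2 : ℝ)*a^2*t^3) * v1 + ((1 : ℝ)*t^2 + (2 : ℝ)*t^3 + (-2 : ℝ)*a*t^2 + (-4 : ℝ)*a*t^3 + (1 : ℝ)*a^2*t^2 + (2 : ℝ)*a^2*t^3) * v2)*x + (((1 : ℝ)*t^3 + (-2 : ℝ)*a*t^3 + (1 : ℝ)*a^2*t^3) * v1 + ((-1 : ℝ)*t^2 + (-1 : ℝ)*t^3 + (2 : ℝ)*a*t^2 + (2 : ℝ)*a*t^3 + (-1 : ℝ)*a^2*t^2 + (-1 : ℝ)*a^2*t^3) * v2)*x^2 + (((0 : ℝ)) * v1 + ((0 : ℝ)) * v2)*x^3 + (((0 : ℝ)) * v1 + ((0 : ℝ)) * v2)*x^4) (Set.uIcc t a) := by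
    intro x hx
    rw [Set.uIcc_of_le (hta)] at hx
    obtain ⟨hx1, hx2⟩ := hx
    dsimp only
    rw [min_eq_right (show x ≤ a by linarith), min_eq_right (show t ≤ x by linarith), min_eq_right (show t ≤ a by linarith), max_eq_left (show (0:ℝ) ≤ x - t by linarith), max_eq_left (show (0:ℝ) ≤ a - t by linarith)]
    ring
  have e3 : Set.EqOn (fun x : ℝ =>
      (min a t - a * t) * (min x t - x * t) *
      ((min (min a x) t + a * x * t - x * min a t - a * min x t) * v1
        + (max (min a x - t) 0 + a * x * (1 - t) - a * max (x - t) 0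
            - x * max (a - t) 0) * v2))
      (fun x : ℝ => (((1 : ℝ)*t^3 + (-2 : ℝ)*a*t^3 + (1 : ℝ)*a^2*t^3) * v1 + ((-1 : ℝ)*t^3 + (1 : ℝ)*a*t^2 + (2 : ℝ)*a*t^3 + (-1 : ℝ)*a^2*t^2 + (-1 : ℝ)*a^2*t^3) * v2) + (((-2 : ℝ)*t^3 + (4 : ℝ)*a*t^3 + (-2 : ℝ)*a^2*t^3) * v1 + ((2 : ℝ)*t^3 + (-2 : ℝ)*a*t^2 + (-4 : ℝ)*a*t^3 + (2 : ℝ)*a^2*t^2 + (2 : ℝ)*a^2*t^3) * v2)*x + (((1 : ℝ)*t^3 + (-2 : ℝ)*a*t^3 + (1 : ℝ)*a^2*t^3) * v1 + ((-1 : ℝ)*t^3 + (1 : ℝ)*a*t^2 + (2 : ℝ)*a*t^3 + (-1 : ℝ)*a^2*t^2 + (-1 : ℝ)*a^2*t^3) * v2)*x^2 + (((0 : ℝ)) * v1 + ((0 : ℝ)) * v2)*x^3 + (((0 : ℝ)) * v1 + ((0 : ℝ)) * v2)*x^4) (Set.uIcc a (1:ℝ)) := by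
    intro x hx
    rw [Set.uIcc_of_le (ha1)] at hx
    obtain ⟨hx1, hx2⟩ := hx
    dsimp only
    rw [min_eq_left (show a ≤ x by linarith), min_eq_right (show t ≤ x by linarith), min_eq_right (show t ≤ a by linarith), max_eq_left (show (0:ℝ) ≤ x - t by linarith), max_eq_left (show (0:ℝ) ≤ a - t by linarith)]
    ring
  have hc : Continuous (fun x : ℝ =>
      (min a t - a * t) * (min x t - x * t) *
      ((min (min a x) t + a * x * t - x * min a t - a * min x t) * v1
        + (max (min a x - t) 0 + a * x * (1 - t) - a * max (x - t) 0
            - x * max (a - t) 0) * v2)) := by fun_prop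
  have i1 : IntervalIntegrable (fun x : ℝ =>
      (min a t - a * t) * (min x t - x * t) *
      ((min (min a x) t + a * x * t - x * min a t - a * min x t) * v1
        + (max (min a x - t) 0 + a * x * (1 - t) - a * max (x - t) 0
            - x * max (a - t) 0) * v2)) volume 0 t := hc.intervalIntegrable _ _
  have i2 : IntervalIntegrable (fun x : ℝ =>
      (min a t - a * t) * (min x t - x * t) *
      ((min (min a x) t + a * x * t - x * min a t - a * min x t) * v1
        + (max (min a x - t) 0 + a * x * (1 - t) - a * max (x - t) 0
            - x * max (a - t) 0) * v2)) volume t a := hc.intervalIntegrable _ _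
  have i3 : IntervalIntegrable (fun x : ℝ =>
      (min a t - a * t) * (min x t - x * t) *
      ((min (min a x) t + a * x * t - x * min a t - a * min x t) * v1
        + (max (min a x - t) 0 + a * x * (1 - t) - a * max (x - t) 0
            - x * max (a - t) 0) * v2)) volume 0 a := hc.intervalIntegrable _ _
  have i4 : IntervalIntegrable (fun x : ℝ =>
      (min a t - a * t) * (min x t - x * t) *
      ((min (min a x) t + a * x * t - x * min a t - a * min x t) * v1
        + (max (min a x - t) 0 + a * x * (1 - t) - a * max (x - t) 0
            - x * max (a - t) 0) * v2)) volume a 1 := hc.intervalIntegrable _ _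
  rw [← integral_add_adjacent_intervals i3 i4, ← integral_add_adjacent_intervals i1 i2,
    integral_congr e1, integral_congr e2, ip, ip]
  rw [integral_congr e3, ip]
  ring

private lemma key (t v1 v2 : ℝ) (ht0 : 0 < t) (ht1 : t < 1) :
    (∫ s1 in (0:ℝ)..1, ∫ s2 in (0:ℝ)..1,
      (min s1 t - s1 * t) * (min s2 t - s2 * t) *
      ((min (min s1 s2) t + s1 * s2 * t - s2 * min s1 t - s1 * min s2 t) * v1
        + (max (min s1 s2 - t) 0 + s1 * s2 * (1 - t) - s1 * max (s2 - t) 0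
            - s2 * max (s1 - t) 0) * v2))
    = ((1/9 : ℝ)*t^3 + (-4/9 : ℝ)*t^4 + (31/45 : ℝ)*t^5 + (-22/45 : ℝ)*t^6 + (2/15 : ℝ)*t^7) * v1 + ((1/45 : ℝ)*t^2 + (-1/9 : ℝ)*t^3 + (1/3 : ℝ)*t^4 + (-5/9 : ℝ)*t^5 + (4/9 : ℝ)*t^6 + (-2/15 : ℝ)*t^7) * v2 := by
  have hlow : Set.EqOn (fun a : ℝ => ∫ x in (0:ℝ)..1,
      (min a t - a * t) * (min x t - x * t) *
      ((min (min a x) t + a * x * t - x * min a t - a * min x t) * v1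
        + (max (min a x - t) 0 + a * x * (1 - t) - a * max (x - t) 0
            - x * max (a - t) 0) * v2))
      (fun a : ℝ => (((0 : ℝ)) * v1 + ((0 : ℝ)) * v2) + (((0 : ℝ)) * v1 + ((0 : ℝ)) * v2)*a + (((1/3 : ℝ)*t + (-7/6 : ℝ)*t^2 + (5/3 : ℝ)*t^3 + (-7/6 : ℝ)*t^4 + (1/3 : ℝ)*t^5) * v1 + ((1/3 : ℝ)*t^2 + (-1 : ℝ)*t^3 + (1 : ℝ)*t^4 + (-1/3 : ℝ)*t^5) * v2)*a^2 + (((0 : ℝ)) * v1 + ((0 : ℝ)) * v2)*a^3 + (((-1/6 : ℝ) + (1/3 : ℝ)*t + (-1/6 : ℝ)*t^2) * v1 + ((0 : ℝ)) * v2)*a^4) (Set.uIcc 0 t) := by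
    intro a ha
    rw [Set.uIcc_of_le ht0.le] at ha
    exact inner_low t v1 v2 ht0 ht1 a ha.1 ha.2
  have hhigh : Set.EqOn (fun a : ℝ => ∫ x in (0:ℝ)..1,
      (min a t - a * t) * (min x t - x * t) *
      ((min (min a x) t + a * x * t - x * min a t - a * min x t) * v1
        + (max (min a x - t) 0 + a * x * (1 - t) - a * max (x - t) 0
            - x * max (a - t) 0) * v2))
      (fun a : ℝ => (((1/3 : ℝ)*t^3 + (-2/3 : ℝ)*t^4 + (1/3 : ℝ)*t^5) * v1 + ((-1/3 : ℝ)*t^3 + (1/2 : ℝ)*t^4 + (-1/3 : ℝ)*t^5) * v2) + (((-2/3 : ℝ)*t^3 + (4/3 : ℝ)*t^4 + (-2/3 : ℝ)*t^5) * v1 + ((1/3 : ℝ)*t^2 + (2/3 : ℝ)*t^3 + (-1 : ℝ)*t^4 + (2/3 : ℝ)*t^5) * v2)*a + (((1/3 : ℝ)*t^3 + (-2/3 : ℝ)*t^4 + (1/3 : ℝ)*t^5) * v1 + ((-5/6 : ℝ)*t^2 + (-1/3 : ℝ)*t^3 + (1/2 : ℝ)*t^4 + (-1/3 : ℝ)*t^5)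 * v2)*a^2 + (((0 : ℝ)) * v1 + ((2/3 : ℝ)*t^2) * v2)*a^3 + (((0 : ℝ)) * v1 + ((-1/6 : ℝ)*t^2) * v2)*a^4) (Set.uIcc t 1) := by
    intro a ha
    rw [Set.uIcc_of_le ht1.le] at ha
    exact inner_high t v1 v2 ht0 ht1 a ha.1 ha.2
  have hIl : IntervalIntegrable (fun a : ℝ => ∫ x in (0:ℝ)..1,
      (min a t - a * t) * (min x t - x * t) *
      ((min (min a x) t + a * x * t - x * min a t - a * min x t) * v1
        + (max (min a x - t) 0 + a * x * (1 - t) - a * max (x - t) 0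
            - x * max (a - t) 0) * v2)) volume 0 t :=
    (((by fun_prop : Continuous (fun a : ℝ => (((0 : ℝ)) * v1 + ((0 : ℝ)) * v2) + (((0 : ℝ)) * v1 + ((0 : ℝ)) * v2)*a + (((1/3 : ℝ)*t + (-7/6 : ℝ)*t^2 + (5/3 : ℝ)*t^3 + (-7/6 : ℝ)*t^4 + (1/3 : ℝ)*t^5) * v1 + ((1/3 : ℝ)*t^2 + (-1 : ℝ)*t^3 + (1 : ℝ)*t^4 + (-1/3 : ℝ)*t^5) * v2)*a^2 + (((0 : ℝ)) * v1 + ((0 : ℝ)) * v2)*a^3 + (((-1/6 : ℝ) + (1/3 : ℝ)*t + (-1/6 : ℝ)*t^2) * v1 + ((0 : ℝ)) * v2)*a^4)).continuousOn).congr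
      hlow).intervalIntegrable
  have hIh : IntervalIntegrable (fun a : ℝ => ∫ x in (0:ℝ)..1,
      (min a t - a * t) * (min x t - x * t) *
      ((min (min a x) t + a * x * t - x * min a t - a * min x t) * v1
        + (max (min a x - t) 0 + a * x * (1 - t) - a * max (x - t) 0
            - x * max (a - t) 0) * v2)) volume t 1 :=
    (((by fun_prop : Continuous (fun a : ℝ => (((1/3 : ℝ)*t^3 + (-2/3 : ℝ)*t^4 + (1/3 : ℝ)*t^5) * v1 + ((-1/3 : ℝ)*t^3 + (1/2 : ℝ)*t^4 + (-1/3 : ℝ)*t^5) * v2) + (((-2/3 : ℝ)*t^3 + (4/3 : ℝ)*t^4 + (-2/3 : ℝ)*t^5) * v1 + ((1/3 : ℝ)*t^2 + (2/3 : ℝ)*t^3 + (-1 : ℝ)*t^4 + (2/3 : ℝ)*t^5) * v2)*a + (((1/3 : ℝ)*t^3 + (-2/3 : ℝ)*t^4 + (1/3 : ℝ)*t^5) * v1 + ((-5/6 : ℝ)*t^2 + (-1/3 : ℝ)*t^3 + (1/2 : ℝ)*t^4 + (-1/3 : ℝ)*t^5) * v2)*a^2 + (((0 : ℝ)) * v1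 + ((2/3 : ℝ)*t^2) * v2)*a^3 + (((0 : ℝ)) * v1 + ((-1/6 : ℝ)*t^2) * v2)*a^4)).continuousOn).congr
      hhigh).intervalIntegrable
  rw [← integral_add_adjacent_intervals hIl hIh, integral_congr hlow, integral_congr hhigh,
    ip, ip]
  ring

/-- The asymptotic variance `36 δᵀΓδ/(t(1-t))⁴` built from the covariance
kernel of Theorem 4.2 equals formula (5.1) of the paper. -/
theorem asymptotic_variance_formula (k : ℕ) (t : ℝ) (ht : t ∈ Set.Ioo (0:ℝ) 1)
    (V1 V2 : Matrix (Fin k) (Fin k) ℝ) (δ : Fin k → ℝ)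
    (d : ℝ → ℝ → Matrix (Fin k) (Fin k) ℝ)
    (hd : ∀ s1 s2, d s1 s2 =
      (min (min s1 s2) t + s1 * s2 * t - s2 * min s1 t - s1 * min s2 t) • V1
      + (max (min s1 s2 - t) 0 + s1 * s2 * (1 - t) - s1 * max (s2 - t) 0
          - s2 * max (s1 - t) 0) • V2)
    (Γ : Matrix (Fin k) (Fin k) ℝ)
    (hΓ : ∀ i j, Γ i j = ∫ s1 in (0:ℝ)..1, ∫ s2 in (0:ℝ)..1,
        (min s1 t - s1 * t) * (min s2 t - s2 * t) * d s1 s2 i j) :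
    (36 / (t * (1 - t)) ^ 4) * (∑ i, ∑ j, δ i * Γ i j * δ j)
      = (4 / (5 * t ^ 2 * (1 - t) ^ 2)) *
        (∑ i, ∑ j, δ i * (t * (5 - 10 * t + 6 * t ^ 2) * V1 i j
          + (1 - 3 * t + 8 * t ^ 2 - 6 * t ^ 3) * V2 i j) * δ j) := by
  obtain ⟨ht0, ht1⟩ := ht
  have hG : ∀ i j, Γ i j = ((1/9 : ℝ)*t^3 + (-4/9 : ℝ)*t^4 + (31/45 : ℝ)*t^5 + (-22/45 : ℝ)*t^6 + (2/15 : ℝ)*t^7) * V1 i j + ((1/45 : ℝ)*t^2 + (-1/9 : ℝ)*t^3 + (1/3 : ℝ)*t^4 + (-5/9 : ℝ)*t^5 + (4/9 : ℝ)*t^6 + (-2/15 : ℝ)*t^7) * V2 i j := by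
    intro i j
    rw [hΓ i j]
    have h := key t (V1 i j) (V2 i j) ht0 ht1
    simp only [hd, Matrix.add_apply, Matrix.smul_apply, smul_eq_mul]
    exact h
  rw [Finset.mul_sum, Finset.mul_sum]
  refine Finset.sum_congr rfl fun i _ => ?_
  rw [Finset.mul_sum, Finset.mul_sum]
  refine Finset.sum_congr rfl fun j _ => ?_
  rw [hG i j]
  have h1 : t ≠ 0 := ne_of_gt ht0
  have h2 : (1:ℝ) - t ≠ 0 := ne_of_gt (by linarith)
  field_simp
  ring
end

section
/- Let t ∈ (0,1), let Δ̃ : ℝ → ℝ be measurable, and let k1, k2 : ℝ × ℝ → ℝ be measurable kernels such that ∫∫ |Δ̃(z1) Δ̃(z2) k_i(z1,z2)| dz1 dz2 < ∞ for i = 1,2. Define Z(s,z) = (min(s,t) − st)·Δ̃(z) and h(s1,z1,s2,z2) = { min(s1,s2,t) + s1 s2 t − s2·min(s1,t) − s1·min(s2,t) }·k1(z1,z2) + { max(min(s1,s2) − t, 0) + s1 s2 (1−t) − s1·max(s2−t,0) − s2·max(s1−t,0) }·k2(z1,z2). Then 4 ∫₀¹∫₀¹∫_ℝ∫_ℝ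 Z(s1,z1) Z(s2,z2) h(s1,z1,s2,z2) dz1 dz2 ds1 ds2 = (4/45)·t²(1−t)²·[ t(5 − 10t + 6t²)·∫∫ Δ̃(z1)Δ̃(z2) k1(z1,z2) dz1 dz2 + (1 − 3t + 8t² − 6t³)·∫∫ Δ̃(z1)Δ̃(z2) k2(z1,z2) dz1 dz2 ]. -/
/-!
Write `Z(s, z) = d(s) Δ̃(z)` with `d(s) = min s t - s t`, and `h = c₁ k₁ + c₂ k₂`. The
`z`-integrals then factor out, and the variance is `I₁ ∫∫ d d c₁ + I₂ ∫∫ d d c₂` with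
`Iᵢ = ∫∫ Δ̃ Δ̃ kᵢ`. Time reversal `(t, s) ↦ (1 - t, 1 - s)` fixes `d` and maps `c₁` to `c₂`, so the
second weight at `t` is the first one at `1 - t`. The first is the integral of a piecewise
polynomial, computed by splitting `[0, 1]` at `t` and at `s₁`.
-/

open MeasureTheory

theorem integral_integral_const_mul_add {α β : Type*} [MeasurableSpace α] [MeasurableSpace β]
    {μ : Measure α} {ν : Measure β} [SFinite μ] [SFinite ν] {f g : α → β → ℝ}
    (hf : Integrable (Function.uncurry f) (μ.prod ν))
    (hg : Integrable (Function.uncurry g) (μ.prod ν)) (a b : ℝ) :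
    ∫ x, ∫ y, (a * f x y + b * g x y) ∂ν ∂μ =
      a * ∫ x, ∫ y, f x y ∂ν ∂μ + b * ∫ x, ∫ y, g x y ∂ν ∂μ := by
  rw [integral_integral hf, integral_integral hg,
    integral_integral (f := fun x y => a * f x y + b * g x y)
      ((hf.const_mul a).add (hg.const_mul b)),
    integral_add (f := fun z : α × β => a * f z.1 z.2) (g := fun z : α × β => b * g z.1 z.2)
      (hf.const_mul a) (hg.const_mul b), integral_const_mul, integral_const_mul]

theorem intervalIntegral_intervalIntegral_mul_const_add {f g : ℝ → ℝ → ℝ}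
    (hf : Continuous (Function.uncurry f)) (hg : Continuous (Function.uncurry g))
    (a b c d α β : ℝ) :
    ∫ x in a..b, ∫ y in c..d, (f x y * α + g x y * β) =
      (∫ x in a..b, ∫ y in c..d, f x y) * α + (∫ x in a..b, ∫ y in c..d, g x y) * β := by
  have inner (x : ℝ) : ∫ y in c..d, (f x y * α + g x y * β) =
      (∫ y in c..d, f x y) * α + (∫ y in c..d, g x y) * β := by
    rw [intervalIntegral.integral_add (f := fun y => f x y * α) (g := fun y => g x y * β)
        (((hf.uncurry_left x).mul continuous_const).intervalIntegrable _ _)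
        (((hg.uncurry_left x).mul continuous_const).intervalIntegrable _ _),
      intervalIntegral.integral_mul_const, intervalIntegral.integral_mul_const]
  have hF : Continuous fun x => ∫ y in c..d, f x y :=
    intervalIntegral.continuous_parametric_intervalIntegral_of_continuous' hf c d
  have hG : Continuous fun x => ∫ y in c..d, g x y :=
    intervalIntegral.continuous_parametric_intervalIntegral_of_continuous' hg c d
  simp only [inner]
  rw [intervalIntegral.integral_add (f := fun x => (∫ y in c..d, f x y) * α)
      (g := fun x => (∫ y in c..d, g x y) * β)
      ((hF.mul continuous_const).intervalIntegrable _ _)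
      ((hG.mul continuous_const).intervalIntegrable _ _),
    intervalIntegral.integral_mul_const, intervalIntegral.integral_mul_const]

theorem integral_integral_comp_one_sub (f : ℝ → ℝ → ℝ) :
    ∫ x in (0 : ℝ)..1, ∫ y in (0 : ℝ)..1, f (1 - x) (1 - y) =
      ∫ x in (0 : ℝ)..1, ∫ y in (0 : ℝ)..1, f x y := by
  rw [intervalIntegral.integral_comp_sub_left (fun x => ∫ y in (0 : ℝ)..1, f x (1 - y))]
  simp only [intervalIntegral.integral_comp_sub_left (f _), sub_self, sub_zero]

theorem integral_eq_of_eqOn_quartic {f : ℝ → ℝ} {a b : ℝ} (c₀ c₁ c₂ c₃ c₄ : ℝ)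
    (hf : ∀ x ∈ Set.uIcc a b, f x = c₀ + c₁ * x + c₂ * x ^ 2 + c₃ * x ^ 3 + c₄ * x ^ 4) :
    ∫ x in a..b, f x =
      (c₀ * b + c₁ / 2 * b ^ 2 + c₂ / 3 * b ^ 3 + c₃ / 4 * b ^ 4 + c₄ / 5 * b ^ 5) -
        (c₀ * a + c₁ / 2 * a ^ 2 + c₂ / 3 * a ^ 3 + c₃ / 4 * a ^ 4 + c₄ / 5 * a ^ 5) := by
  rw [intervalIntegral.integral_congr hf]
  refine intervalIntegral.integral_eq_sub_of_hasDerivAt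
    (f := fun y => c₀ * y + c₁ / 2 * y ^ 2 + c₂ / 3 * y ^ 3 + c₃ / 4 * y ^ 4 + c₄ / 5 * y ^ 5)
    (fun x _ => ?_)
    ((by fun_prop : Continuous fun x : ℝ =>
      c₀ + c₁ * x + c₂ * x ^ 2 + c₃ * x ^ 3 + c₄ * x ^ 4).intervalIntegrable _ _)
  convert (((((hasDerivAt_id x).const_mul c₀).add ((hasDerivAt_pow 2 x).const_mul (c₁ / 2))).add
    ((hasDerivAt_pow 3 x).const_mul (c₂ / 3))).add ((hasDerivAt_pow 4 x).const_mul (c₃ / 4))).add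
    ((hasDerivAt_pow 5 x).const_mul (c₄ / 5)) using 1
  · ext y
    simp only [Pi.add_apply, id]
  · simp only [Nat.cast_ofNat]
    ring

namespace DistributionChangeVariance

def drift (t s : ℝ) : ℝ := min s t - s * t

def covBefore (t s₁ s₂ : ℝ) : ℝ :=
  min (min s₁ s₂) t + s₁ * s₂ * t - s₂ * min s₁ t - s₁ * min s₂ t

def covAfter (t s₁ s₂ : ℝ) : ℝ :=
  max (min s₁ s₂ - t) 0 + s₁ * s₂ * (1 - t) - s₁ * max (s₂ - t) 0 - s₂ * max (s₁ - t) 0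

def weightBefore (t s₁ s₂ : ℝ) : ℝ := drift t s₁ * drift t s₂ * covBefore t s₁ s₂

def weightAfter (t s₁ s₂ : ℝ) : ℝ := drift t s₁ * drift t s₂ * covAfter t s₁ s₂

theorem continuous_weightBefore (t : ℝ) : Continuous (Function.uncurry (weightBefore t)) := by
  unfold Function.uncurry weightBefore drift covBefore; fun_prop

theorem continuous_weightAfter (t : ℝ) : Continuous (Function.uncurry (weightAfter t)) := by
  unfold Function.uncurry weightAfter drift covAfter; fun_prop

theorem drift_one_sub (t s : ℝ) : drift (1 - t) (1 - s) = drift t s := by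
  rw [drift, drift, min_sub_sub_left]
  linear_combination -min_add_max s t

theorem covBefore_one_sub (t s₁ s₂ : ℝ) :
    covBefore (1 - t) (1 - s₁) (1 - s₂) = covAfter t s₁ s₂ := by
  have max_sub_zero : ∀ x, max (x - t) 0 = max x t - t := fun x => by
    rw [← max_sub_sub_right, sub_self]
  rw [covBefore, covAfter, min_sub_sub_left, min_sub_sub_left, min_sub_sub_left,
    min_sub_sub_left, max_sub_zero, max_sub_zero, max_sub_zero, sup_sup_distrib_right,
    sup_inf_right]
  linear_combination -min_add_max (max s₁ t) (max s₂ t)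

theorem weightBefore_one_sub (t s₁ s₂ : ℝ) :
    weightBefore (1 - t) (1 - s₁) (1 - s₂) = weightAfter t s₁ s₂ := by
  rw [weightBefore, weightAfter, drift_one_sub, drift_one_sub, covBefore_one_sub]

section Pieces

variable {t s x : ℝ}

theorem weightBefore_of_le_of_le (hs : s ≤ t) (hx : x ≤ t) :
    weightBefore t s x = s * x * (1 - t) ^ 2 * (min s x - s * x * (2 - t)) := by
  rw [weightBefore, drift, drift, covBefore, min_eq_left hs, min_eq_left hx,
    min_eq_left (min_le_of_left_le hs)]
  ring

theorem weightBefore_of_le_of_ge (hs : s ≤ t) (hx : t ≤ x) :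
    weightBefore t s x = s ^ 2 * t * (1 - t) ^ 2 * (1 - x) ^ 2 := by
  rw [weightBefore, drift, drift, covBefore, min_eq_left hs, min_eq_right hx,
    min_eq_left (hs.trans hx), min_eq_left hs]
  ring

theorem weightBefore_of_ge_of_le (hs : t ≤ s) (hx : x ≤ t) :
    weightBefore t s x = x ^ 2 * t * (1 - t) ^ 2 * (1 - s) ^ 2 := by
  rw [weightBefore, drift, drift, covBefore, min_eq_right hs, min_eq_left hx,
    min_eq_right (hx.trans hs), min_eq_left hx]
  ring

theorem weightBefore_of_ge_of_ge (hs : t ≤ s) (hx : t ≤ x) :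
    weightBefore t s x = t ^ 3 * (1 - s) ^ 2 * (1 - x) ^ 2 := by
  rw [weightBefore, drift, drift, covBefore, min_eq_right hs, min_eq_right hx,
    min_eq_right (le_min hs hx)]
  ring

end Pieces

theorem integral_weightBefore_of_le {t s : ℝ} (hs₀ : 0 ≤ s) (hst : s ≤ t) (ht : t ≤ 1) :
    ∫ x in (0 : ℝ)..1, weightBefore t s x =
      (1 - t) ^ 2 / 6 * (t * (2 - 3 * t + 2 * t ^ 2) * s ^ 2 - s ^ 4) := by
  have hc : Continuous (weightBefore t s) := (continuous_weightBefore t).uncurry_left s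
  rw [← intervalIntegral.integral_add_adjacent_intervals (hc.intervalIntegrable 0 t)
      (hc.intervalIntegrable t 1),
    ← intervalIntegral.integral_add_adjacent_intervals (hc.intervalIntegrable 0 s)
      (hc.intervalIntegrable s t),
    integral_eq_of_eqOn_quartic 0 0 (s * (1 - t) ^ 2 * (1 - s * (2 - t))) 0 0 fun x hx => ?_,
    integral_eq_of_eqOn_quartic 0 (s ^ 2 * (1 - t) ^ 2) (-(s ^ 2 * (1 - t) ^ 2 * (2 - t))) 0 0
      fun x hx => ?_,
    integral_eq_of_eqOn_quartic (s ^ 2 * t * (1 - t) ^ 2) (-2 * s ^ 2 * t * (1 - t) ^ 2)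
      (s ^ 2 * t * (1 - t) ^ 2) 0 0 fun x hx => ?_]
  · ring
  · rw [Set.uIcc_of_le ht] at hx
    rw [weightBefore_of_le_of_ge hst hx.1]; ring
  · rw [Set.uIcc_of_le hst] at hx
    rw [weightBefore_of_le_of_le hst hx.2, min_eq_left hx.1]; ring
  · rw [Set.uIcc_of_le hs₀] at hx
    rw [weightBefore_of_le_of_le hst (hx.2.trans hst), min_eq_right hx.2]; ring

theorem integral_weightBefore_of_ge {t s : ℝ} (ht₀ : 0 ≤ t) (hts : t ≤ s) (ht : t ≤ 1) :
    ∫ x in (0 : ℝ)..1, weightBefore t s x = t ^ 3 * (1 - t) ^ 2 * (1 - s) ^ 2 / 3 := by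
  have hc : Continuous (weightBefore t s) := (continuous_weightBefore t).uncurry_left s
  rw [← intervalIntegral.integral_add_adjacent_intervals (hc.intervalIntegrable 0 t)
      (hc.intervalIntegrable t 1),
    integral_eq_of_eqOn_quartic 0 0 (t * (1 - t) ^ 2 * (1 - s) ^ 2) 0 0 fun x hx => ?_,
    integral_eq_of_eqOn_quartic (t ^ 3 * (1 - s) ^ 2) (-2 * t ^ 3 * (1 - s) ^ 2)
      (t ^ 3 * (1 - s) ^ 2) 0 0 fun x hx => ?_]
  · ring
  · rw [Set.uIcc_of_le ht] at hx
    rw [weightBefore_of_ge_of_ge hts hx.1]; ring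
  · rw [Set.uIcc_of_le ht₀] at hx
    rw [weightBefore_of_ge_of_le hts hx.2]; ring

theorem integral_integral_weightBefore {t : ℝ} (ht₀ : 0 ≤ t) (ht₁ : t ≤ 1) :
    ∫ s in (0 : ℝ)..1, ∫ x in (0 : ℝ)..1, weightBefore t s x =
      t ^ 3 * (1 - t) ^ 2 * (5 - 10 * t + 6 * t ^ 2) / 45 := by
  have hc : Continuous fun s => ∫ x in (0 : ℝ)..1, weightBefore t s x :=
    intervalIntegral.continuous_parametric_intervalIntegral_of_continuous'
      (continuous_weightBefore t) 0 1
  rw [← intervalIntegral.integral_add_adjacent_intervals (hc.intervalIntegrable 0 t)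
      (hc.intervalIntegrable t 1),
    integral_eq_of_eqOn_quartic 0 0 ((1 - t) ^ 2 / 6 * t * (2 - 3 * t + 2 * t ^ 2)) 0
      (-(1 - t) ^ 2 / 6) fun s hs => ?_,
    integral_eq_of_eqOn_quartic (t ^ 3 * (1 - t) ^ 2 / 3) (-2 * t ^ 3 * (1 - t) ^ 2 / 3)
      (t ^ 3 * (1 - t) ^ 2 / 3) 0 0 fun s hs => ?_]
  · ring
  · rw [Set.uIcc_of_le ht₁] at hs
    rw [integral_weightBefore_of_ge ht₀ hs.1 ht₁]; ring
  · rw [Set.uIcc_of_le ht₀] at hs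
    rw [integral_weightBefore_of_le hs.1 hs.2 ht₁]; ring

theorem integral_integral_weightAfter {t : ℝ} (ht₀ : 0 ≤ t) (ht₁ : t ≤ 1) :
    ∫ s in (0 : ℝ)..1, ∫ x in (0 : ℝ)..1, weightAfter t s x =
      t ^ 2 * (1 - t) ^ 2 * (1 - 3 * t + 8 * t ^ 2 - 6 * t ^ 3) / 45 := by
  simp only [← weightBefore_one_sub]
  rw [integral_integral_comp_one_sub (weightBefore (1 - t)),
    integral_integral_weightBefore (sub_nonneg.2 ht₁) (sub_le_self 1 ht₀)]
  ring

end DistributionChangeVariance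

open DistributionChangeVariance in
theorem distribution_test_variance_formula_general
    (t : ℝ) (ht : t ∈ Set.Ioo (0:ℝ) 1)
    (Δ' : ℝ → ℝ)
    (k1 k2 : ℝ → ℝ → ℝ)
    (hint1 : Integrable (fun p : ℝ × ℝ => Δ' p.1 * Δ' p.2 * k1 p.1 p.2))
    (hint2 : Integrable (fun p : ℝ × ℝ => Δ' p.1 * Δ' p.2 * k2 p.1 p.2))
    (Z : ℝ → ℝ → ℝ) (hZ : ∀ s z, Z s z = (min s t - s * t) * Δ' z)
    (h : ℝ → ℝ → ℝ → ℝ → ℝ)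
    (hh : ∀ s1 z1 s2 z2, h s1 z1 s2 z2 =
      (min (min s1 s2) t + s1 * s2 * t - s2 * min s1 t - s1 * min s2 t) * k1 z1 z2
      + (max (min s1 s2 - t) 0 + s1 * s2 * (1 - t) - s1 * max (s2 - t) 0
          - s2 * max (s1 - t) 0) * k2 z1 z2) :
    4 * (∫ s1 in (0:ℝ)..1, ∫ s2 in (0:ℝ)..1,
        ∫ z1 : ℝ, ∫ z2 : ℝ, Z s1 z1 * Z s2 z2 * h s1 z1 s2 z2)
      = (4 / 45) * t ^ 2 * (1 - t) ^ 2 *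
        (t * (5 - 10 * t + 6 * t ^ 2) * (∫ z1 : ℝ, ∫ z2 : ℝ, Δ' z1 * Δ' z2 * k1 z1 z2)
          + (1 - 3 * t + 8 * t ^ 2 - 6 * t ^ 3) *
            (∫ z1 : ℝ, ∫ z2 : ℝ, Δ' z1 * Δ' z2 * k2 z1 z2)) := by
  have hsplit : ∀ s1 z1 s2 z2, Z s1 z1 * Z s2 z2 * h s1 z1 s2 z2 =
      weightBefore t s1 s2 * (Δ' z1 * Δ' z2 * k1 z1 z2) +
        weightAfter t s1 s2 * (Δ' z1 * Δ' z2 * k2 z1 z2) := fun s1 z1 s2 z2 => by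
    rw [hZ, hZ, hh, weightBefore, weightAfter, drift, drift, covBefore, covAfter]
    ring
  simp only [hsplit,
    integral_integral_const_mul_add (f := fun z1 z2 => Δ' z1 * Δ' z2 * k1 z1 z2)
      (g := fun z1 z2 => Δ' z1 * Δ' z2 * k2 z1 z2) hint1 hint2]
  rw [intervalIntegral_intervalIntegral_mul_const_add (continuous_weightBefore t)
      (continuous_weightAfter t),
    integral_integral_weightBefore ht.1.le ht.2.le, integral_integral_weightAfter ht.1.le ht.2.le]
  ring

/-- the asymptotic variance formula (5.9) of the paper. -/
theorem distribution_test_variance_formula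
    (t : ℝ) (ht : t ∈ Set.Ioo (0:ℝ) 1)
    (Δ' : ℝ → ℝ) (hΔ' : Measurable Δ')
    (k1 k2 : ℝ → ℝ → ℝ)
    (hk1 : Measurable (fun p : ℝ × ℝ => k1 p.1 p.2))
    (hk2 : Measurable (fun p : ℝ × ℝ => k2 p.1 p.2))
    (hint1 : Integrable (fun p : ℝ × ℝ => Δ' p.1 * Δ' p.2 * k1 p.1 p.2))
    (hint2 : Integrable (fun p : ℝ × ℝ => Δ' p.1 * Δ' p.2 * k2 p.1 p.2))
    (Z : ℝ → ℝ → ℝ) (hZ : ∀ s z, Z s z = (min s t - s * t) * Δ' z)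
    (h : ℝ → ℝ → ℝ → ℝ → ℝ)
    (hh : ∀ s1 z1 s2 z2, h s1 z1 s2 z2 =
      (min (min s1 s2) t + s1 * s2 * t - s2 * min s1 t - s1 * min s2 t) * k1 z1 z2
      + (max (min s1 s2 - t) 0 + s1 * s2 * (1 - t) - s1 * max (s2 - t) 0
          - s2 * max (s1 - t) 0) * k2 z1 z2) :
    4 * (∫ s1 in (0:ℝ)..1, ∫ s2 in (0:ℝ)..1,
        ∫ z1 : ℝ, ∫ z2 : ℝ, Z s1 z1 * Z s2 z2 * h s1 z1 s2 z2)
      = (4 / 45) * t ^ 2 * (1 - t) ^ 2 *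
        (t * (5 - 10 * t + 6 * t ^ 2) * (∫ z1 : ℝ, ∫ z2 : ℝ, Δ' z1 * Δ' z2 * k1 z1 z2)
          + (1 - 3 * t + 8 * t ^ 2 - 6 * t ^ 3) *
            (∫ z1 : ℝ, ∫ z2 : ℝ, Δ' z1 * Δ' z2 * k2 z1 z2)) :=
  distribution_test_variance_formula_general t ht Δ' k1 k2 hint1 hint2 Z hZ h hh
end
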